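/- arXiv:2006.16797 — 14 statements merged into one kernel-verified Lean document; each statement's English description precedes it below -/
import Mathlib

section
/- Let n ≥ 1 and let a : {1,…,n} → ℤ be a verifying imbalance with the left pan lighter, i.e., Σ_{i=1}^n i·a(i) < 0 and for every permutation σ of {1,…,n} with σ ≠ id one has Σ_{i=1}^n i·a(σ(i)) ≥ 0. Then the multiplicities are strictly decreasing: a(i) > a(j) whenever 1 ≤ i < j ≤ n. That is, every verifying imbalance is downhill. -/
/-- A verifying imbalance (left pan lighter) has strictly decreasing
multiplicities, i.e. it is downhill. -/
theorem verifying_imbalance_downhill (n : ℕ) (hn : 1 ≤ n) (a : Fin n → ℤ)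
    (himb : ∑ i : Fin n, ((i : ℤ) + 1) * a i < 0)
    (hver : ∀ σ : Equiv.Perm (Fin n), σ ≠ 1 →
      0 ≤ ∑ i : Fin n, ((i : ℤ) + 1) * a (σ i)) :
    ∀ i j : Fin n, i < j → a j < a i := by
  intro i j hij
  by_contra h
  push_neg at h
  have hne : i ≠ j := ne_of_lt hij
  have hσ : Equiv.swap i j ≠ 1 := by
    intro hc
    have := Equiv.swap_eq_one_iff.mp hc
    exact hne this
  have hsum := hver (Equiv.swap i j) hσ
  -- compute the difference of sums
  have hdiff : ∑ k : Fin n, ((k : ℤ) + 1) * a (Equiv.swap i j k)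
      - ∑ k : Fin n, ((k : ℤ) + 1) * a k
      = ((j : ℤ) - (i : ℤ)) * (a i - a j) := by
    rw [← Finset.sum_sub_distrib]
    have hvan : ∀ k ∈ Finset.univ, k ∉ ({i, j} : Finset (Fin n)) →
        ((k : ℤ) + 1) * a (Equiv.swap i j k) - ((k : ℤ) + 1) * a k = 0 := by
      intro k _ hk
      simp only [Finset.mem_insert, Finset.mem_singleton, not_or] at hk
      rw [Equiv.swap_apply_of_ne_of_ne hk.1 hk.2]
      ring
    rw [← Finset.sum_subset (Finset.subset_univ ({i, j} : Finset (Fin n))) hvan]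
    rw [Finset.sum_pair hne]
    rw [Equiv.swap_apply_left, Equiv.swap_apply_right]
    ring
  have hji : (i : ℤ) < (j : ℤ) := by exact_mod_cast hij
  have hle : ((j : ℤ) - (i : ℤ)) * (a i - a j) ≤ 0 :=
    mul_nonpos_of_nonneg_of_nonpos (by linarith) (by linarith)
  linarith
end

section
/- Let n ≥ 1 and let a : {1,…,n} → ℤ be a verifying imbalance with the left pan lighter, i.e., Σ_{i=1}^n i·a(i) < 0 and Σ_{i=1}^n i·a(σ(i)) ≥ 0 for every permutation σ ≠ id. Suppose a(x) = 0 for some x ∈ {1,…,n} (the coin of type x is not on the scale). Then a(i) > 0 for all i < x (all lighter coin types are on the lighter, left pan) and a(i) < 0 for all i > x (all heavier coin types are on the heavier, right pan). -/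
/-- In a verifying imbalance (left pan lighter), if type `x` is absent from
the scale, all lighter types are on the left pan and all heavier types are
on the right pan. -/
theorem verifying_imbalance_missing_type (n : ℕ) (hn : 1 ≤ n) (a : Fin n → ℤ)
    (himb : ∑ i : Fin n, ((i : ℤ) + 1) * a i < 0)
    (hver : ∀ σ : Equiv.Perm (Fin n), σ ≠ 1 →
      0 ≤ ∑ i : Fin n, ((i : ℤ) + 1) * a (σ i))
    (x : Fin n) (hx : a x = 0) :
    (∀ i : Fin n, i < x → 0 < a i) ∧ (∀ i : Fin n, x < i → a i < 0) := by
  have key : ∀ i : Fin n, i ≠ x → 0 < ((x : ℤ) - (i : ℤ)) * a i := by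
    intro i hix
    have hswap : Equiv.swap i x ≠ 1 := by
      intro h
      have : Equiv.swap i x i = (1 : Equiv.Perm (Fin n)) i := by rw [h]
      simp [Equiv.swap_apply_left] at this
      exact hix this.symm
    have hs := hver (Equiv.swap i x) hswap
    have hvanish : ∑ j : Fin n,
        (((j : ℤ) + 1) * a (Equiv.swap i x j) - ((j : ℤ) + 1) * a j)
        = ∑ j ∈ ({i, x} : Finset (Fin n)),
          (((j : ℤ) + 1) * a (Equiv.swap i x j) - ((j : ℤ) + 1) * a j) := by
      refine (Finset.sum_subset (Finset.subset_univ _) ?_).symm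
      intro j _ hj
      simp only [Finset.mem_insert, Finset.mem_singleton, not_or] at hj
      rw [Equiv.swap_apply_of_ne_of_ne hj.1 hj.2]
      ring
    rw [Finset.sum_pair hix, Equiv.swap_apply_left, Equiv.swap_apply_right, hx,
      Finset.sum_sub_distrib] at hvanish
    have heq : ∑ j : Fin n, ((j : ℤ) + 1) * a (Equiv.swap i x j)
        = (∑ j : Fin n, ((j : ℤ) + 1) * a j) + ((x : ℤ) - (i : ℤ)) * a i := by
      linear_combination hvanish
    rw [heq] at hs
    linarith
  constructor
  · intro i hi
    have hk := key i (ne_of_lt hi)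
    have hlt : (i : ℤ) < (x : ℤ) := by exact_mod_cast hi
    nlinarith
  · intro i hi
    have hk := key i (ne_of_gt hi)
    have hlt : (x : ℤ) < (i : ℤ) := by exact_mod_cast hi
    nlinarith
end

section
/- Let n ≥ 1 and let a : {1,…,n} → ℤ be a downhill weighing (a(1) > a(2) > … > a(n)) that is a tight imbalance: Σ_{i=1}^n i·a(i) = −1. Then the weighing is verifying: for every permutation σ of {1,…,n} with σ ≠ id, Σ_{i=1}^n i·a(σ(i)) ≥ 0. -/
/-- A tight downhill imbalance is verifying. -/
theorem tight_downhill_imbalance_verifying (n : ℕ) (hn : 1 ≤ n) (a : Fin n → ℤ)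
    (hdown : ∀ i j : Fin n, i < j → a j < a i)
    (htight : ∑ i : Fin n, ((i : ℤ) + 1) * a i = -1) :
    ∀ σ : Equiv.Perm (Fin n), σ ≠ 1 →
      0 ≤ ∑ i : Fin n, ((i : ℤ) + 1) * a (σ i) := by
  intro σ hσ
  set f : Fin n → ℤ := fun i => (i : ℤ) + 1 with hf
  have hanti : Antivary f a := by
    intro i j hij
    have hji : j < i := by
      by_contra h
      rcases lt_or_eq_of_le (not_lt.1 h) with h' | h'
      · exact absurd (hdown i j h') (not_lt.2 hij.le)
      · rw [h'] at hij; exact lt_irrefl _ hij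
    simp only [hf]
    have : (j : ℤ) ≤ (i : ℤ) := by exact_mod_cast hji.le
    linarith
  have hnot : ¬ Antivary f (a ∘ σ) := by
    intro h
    apply hσ
    have hmono : StrictMono σ := by
      intro i j hij
      by_contra hc
      rcases lt_or_eq_of_le (not_lt.1 hc) with h' | h'
      · have hle := h (show (a ∘ σ) i < (a ∘ σ) j from hdown _ _ h')
        simp only [hf] at hle
        have : (i : ℤ) < (j : ℤ) := by exact_mod_cast hij
        omega
      · exact absurd (σ.injective h'.symm) hij.ne
    have inst : WellFoundedLT (Fin n) := inferInstance
    have hEq : (σ : Fin n → Fin n) = id :=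
      (@StrictMono.range_inj (Fin n) (Fin n) _ _ inst σ id hmono (fun _ _ hh => hh)).1
        (by simp [Equiv.range_eq_univ])
    apply Equiv.ext
    intro i
    simpa using congrFun hEq i
  have hlt : ∑ i, f i * a i < ∑ i, f i * a (σ i) := by
    have := (hanti.sum_mul_lt_sum_mul_comp_perm_iff (σ := σ)).2 hnot
    simpa [smul_eq_mul] using this
  have h1 : ∑ i, f i * a i = -1 := htight
  have h2 : ∑ i : Fin n, ((i : ℤ) + 1) * a (σ i) = ∑ i, f i * a (σ i) := rfl
  rw [h2]
  omega
end

section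
/- Let n ≥ 1 and let a : {1,…,n} → ℤ be a downhill weighing (a(1) > a(2) > … > a(n)) that is a balance: Σ_{i=1}^n i·a(i) = 0. Then the weighing is verifying: for every permutation σ of {1,…,n} with σ ≠ id, Σ_{i=1}^n i·a(σ(i)) ≠ 0 (in fact Σ_{i=1}^n i·a(σ(i)) > 0). -/
/-! The weights `i + 1` increase while `a` strictly decreases, so by the strict case of the
rearrangement inequality the pairing `∑ (i + 1) * a i` is the unique minimum of
`∑ (i + 1) * a (σ i)` over all permutations `σ`. As that minimum is `0`, every other
rearrangement gives a positive sum. -/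

open Equiv

theorem Equiv.Perm.eq_one_of_antitone_comp {ι β : Type*} [LinearOrder ι] [Finite ι] [Preorder β]
    {g : ι → β} (hg : StrictAnti g) {σ : Perm ι} (h : Antitone (g ∘ σ)) : σ = 1 := by
  have hσ : Monotone σ := fun _ _ hij => hg.le_iff_ge.1 (h hij)
  exact Equiv.ext fun _ => (hσ.strictMono_of_injective σ.injective).apply_eq

theorem sum_mul_lt_sum_mul_comp_perm_of_strictMono_of_strictAnti {ι α : Type*} [LinearOrder ι]
    [Fintype ι] [Semiring α] [LinearOrder α] [IsStrictOrderedRing α] [ExistsAddOfLE α]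
    {f g : ι → α} (hf : StrictMono f) (hg : StrictAnti g) {σ : Perm ι} (hσ : σ ≠ 1) :
    ∑ i, f i * g i < ∑ i, f i * g (σ i) := by
  have hfg : Antivary f g := hf.monotone.antivary hg.antitone
  simpa only [smul_eq_mul] using hfg.sum_mul_lt_sum_mul_comp_perm_iff.2 fun h =>
    hσ (Perm.eq_one_of_antitone_comp hg (hf.trans_antivary h.symm))

theorem downhill_balance_verifying_general (n : ℕ) (a : Fin n → ℤ)
    (hdown : ∀ i j : Fin n, i < j → a j < a i)
    (hbal : ∑ i : Fin n, ((i : ℤ) + 1) * a i = 0) :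
    ∀ σ : Equiv.Perm (Fin n), σ ≠ 1 →
      0 < ∑ i : Fin n, ((i : ℤ) + 1) * a (σ i) := by
  intro σ hσ
  have hweight : StrictMono fun i : Fin n => (i : ℤ) + 1 := fun i j hij => by
    simpa using Fin.val_strictMono hij
  exact hbal ▸ sum_mul_lt_sum_mul_comp_perm_of_strictMono_of_strictAnti hweight hdown hσ

/-- A downhill balance is verifying: any nonidentity rearrangement makes the
balance sum strictly positive (in particular nonzero). -/
theorem downhill_balance_verifying (n : ℕ) (hn : 1 ≤ n) (a : Fin n → ℤ)
    (hdown : ∀ i j : Fin n, i < j → a j < a i)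
    (hbal : ∑ i : Fin n, ((i : ℤ) + 1) * a i = 0) :
    ∀ σ : Equiv.Perm (Fin n), σ ≠ 1 →
      0 < ∑ i : Fin n, ((i : ℤ) + 1) * a (σ i) :=
  downhill_balance_verifying_general n a hdown hbal
end

section
/- Let n ≥ 2, let d be a positive integer, and let a : {1,…,n} → ℤ be a verifying imbalance with the left pan lighter whose weight difference is d, i.e., Σ_{i=1}^n i·a(i) = −d and Σ_{i=1}^n i·a(σ(i)) ≥ 0 for every permutation σ ≠ id. Then every two consecutive multiplicities differ by at least d: a(k) − a(k+1) ≥ d for all 1 ≤ k ≤ n−1. -/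
/-- In a verifying imbalance with weight difference `d`, consecutive
multiplicities differ by at least `d`. -/
theorem verifying_imbalance_consecutive_gap (n : ℕ) (hn : 2 ≤ n)
    (d : ℤ) (hd : 1 ≤ d) (a : Fin n → ℤ)
    (hS : ∑ i : Fin n, ((i : ℤ) + 1) * a i = -d)
    (hver : ∀ σ : Equiv.Perm (Fin n), σ ≠ 1 →
      0 ≤ ∑ i : Fin n, ((i : ℤ) + 1) * a (σ i)) :
    ∀ i j : Fin n, (j : ℕ) = (i : ℕ) + 1 → d ≤ a i - a j := by
  intro i j hij
  have hne : i ≠ j := by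
    intro h
    rw [h] at hij
    omega
  have hσ : Equiv.swap i j ≠ 1 := by
    intro h
    apply hne
    have := congrArg (fun σ : Equiv.Perm (Fin n) => σ i) h
    simpa [Equiv.swap_apply_left] using this.symm
  have h := hver (Equiv.swap i j) hσ
  have key : ∑ k : Fin n, ((k : ℤ) + 1) * (a (Equiv.swap i j k) - a k)
      = a i - a j := by
    rw [Finset.sum_eq_add i j hne]
    · have hji : (j : ℤ) = (i : ℤ) + 1 := by exact_mod_cast hij
      rw [Equiv.swap_apply_left, Equiv.swap_apply_right, hji]
      ring
    · intro c _ hc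
      rw [Equiv.swap_apply_of_ne_of_ne hc.1 hc.2]
      ring
    · simp
    · simp
  have hsum : ∑ k : Fin n, ((k : ℤ) + 1) * a (Equiv.swap i j k)
      = -d + (a i - a j) := by
    have := Finset.sum_sub_distrib (s := Finset.univ)
      (f := fun k : Fin n => ((k : ℤ) + 1) * a (Equiv.swap i j k))
      (g := fun k : Fin n => ((k : ℤ) + 1) * a k)
    simp only [← mul_sub] at this
    rw [key, hS] at this; linarith
    
  rw [hsum] at h
  linarith
end

section
/- Let n ≥ 2 and let a : {1,…,n} → ℤ be a downhill weighing (a(1) > a(2) > … > a(n)) with separation point s, i.e., 2 ≤ s ≤ n, a(s) < 0, and a(s−1) ≥ 0. Then the weight on the left pan satisfies Σ_{i=1}^{s−1} i·a(i) ≥ C(s,3) = s(s−1)(s−2)/6, and the weight on the right pan satisfies Σ_{i=s}^{n} i·(−a(i)) ≥ (n−s+1)(n−s+2)(s+2n)/6. -/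
private lemma sumG (c : ℤ) : ∀ m : ℕ, 6 * ∑ i ∈ Finset.Icc 1 m, (i : ℤ) * ((i : ℤ) + c)
    = (m : ℤ) * (m + 1) * (2 * m + 1) + 3 * c * m * (m + 1) := by
  intro m
  induction m with
  | zero => simp
  | succ m ih =>
    rw [Finset.sum_Icc_succ_top (by omega : 1 ≤ m + 1)]
    push_cast
    push_cast at ih
    linear_combination ih

private lemma choose2 (s : ℕ) : 2 * (Nat.choose s 2 : ℤ) = s * ((s : ℤ) - 1) := by
  induction s with
  | zero => simp
  | succ s ih =>
    rw [Nat.choose_succ_succ]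
    push_cast [Nat.choose_one_right]
    push_cast at ih
    linear_combination ih

private lemma choose3 (s : ℕ) : 6 * (Nat.choose s 3 : ℤ) = s * ((s : ℤ) - 1) * ((s : ℤ) - 2) := by
  induction s with
  | zero => simp
  | succ s ih =>
    rw [Nat.choose_succ_succ]
    push_cast
    push_cast at ih
    have h2 := choose2 s
    linear_combination ih + 3 * h2

/-- Bounding weights: in a downhill weighing with separation point `s`, the
left pan weighs at least `C(s,3)` and (six times) the right pan weighs at
least `(n-s+1)(n-s+2)(s+2n)`. -/
theorem downhill_bounding_weights (n s : ℕ) (hn : 2 ≤ n) (a : ℕ → ℤ)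
    (hdown : ∀ i j : ℕ, 1 ≤ i → i < j → j ≤ n → a j < a i)
    (hs2 : 2 ≤ s) (hsn : s ≤ n) (hsep : a s < 0) (hsep' : 0 ≤ a (s - 1)) :
    (Nat.choose s 3 : ℤ) ≤ ∑ i ∈ Finset.Icc 1 (s - 1), (i : ℤ) * a i ∧
    ((n : ℤ) - s + 1) * ((n : ℤ) - s + 2) * ((s : ℤ) + 2 * n) ≤
      6 * ∑ i ∈ Finset.Icc s n, (i : ℤ) * (-a i) := by
  -- gap lemma
  have gap : ∀ k i : ℕ, 1 ≤ i → i + k ≤ n → a (i + k) + (k : ℤ) ≤ a i := by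
    intro k
    induction k with
    | zero => intro i _ _; simp
    | succ k ih =>
      intro i h1 h2
      have h3 : a (i + k + 1) < a (i + k) := hdown (i + k) (i + k + 1) (by omega) (by omega) (by omega)
      have h4 := ih i h1 (by omega)
      have : i + (k + 1) = i + k + 1 := by omega
      rw [this]
      push_cast
      push_cast at h4
      linarith
  constructor
  · -- left pan
    have hbound : ∀ i ∈ Finset.Icc 1 (s - 1), (i : ℤ) * ((s : ℤ) - 1 - i) ≤ (i : ℤ) * a i := by
      intro i hi
      rw [Finset.mem_Icc] at hi
      have hk : i + (s - 1 - i) = s - 1 := by omega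
      have hg := gap (s - 1 - i) i hi.1 (by omega)
      rw [hk] at hg
      have hc : ((s - 1 - i : ℕ) : ℤ) = (s : ℤ) - 1 - i := by
        have h1 : (1 : ℕ) ≤ s := by omega
        omega
      rw [hc] at hg
      have hai : (s : ℤ) - 1 - i ≤ a i := by linarith
      exact mul_le_mul_of_nonneg_left hai (by positivity)
    have hsum := Finset.sum_le_sum hbound
    have hneg : ∑ i ∈ Finset.Icc 1 (s - 1), (i : ℤ) * ((s : ℤ) - 1 - i)
        = -∑ i ∈ Finset.Icc 1 (s - 1), (i : ℤ) * ((i : ℤ) + (1 - (s : ℤ))) := by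
      rw [← Finset.sum_neg_distrib]
      exact Finset.sum_congr rfl (fun i _ => by ring)
    have hG := sumG (1 - (s : ℤ)) (s - 1)
    have hcast : ((s - 1 : ℕ) : ℤ) = (s : ℤ) - 1 := by omega
    rw [hcast] at hG
    have h3 := choose3 s
    linarith [hsum, hG, h3, hneg.symm ▸ hsum]
  · -- right pan
    have hbound : ∀ i ∈ Finset.Icc s n, (i : ℤ) * ((i : ℤ) + (1 - (s : ℤ))) ≤ (i : ℤ) * (-a i) := by
      intro i hi
      rw [Finset.mem_Icc] at hi
      have hk : s + (i - s) = i := by omega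
      have hg := gap (i - s) s (by omega) (by omega)
      rw [hk] at hg
      have hc : ((i - s : ℕ) : ℤ) = (i : ℤ) - s := by omega
      rw [hc] at hg
      have hai : (i : ℤ) + (1 - (s : ℤ)) ≤ -a i := by linarith
      exact mul_le_mul_of_nonneg_left hai (by positivity)
    have hsum := Finset.sum_le_sum hbound
    have hsplit : (∑ i ∈ Finset.Icc 1 (s - 1), (i : ℤ) * ((i : ℤ) + (1 - (s : ℤ))))
        + (∑ i ∈ Finset.Icc s n, (i : ℤ) * ((i : ℤ) + (1 - (s : ℤ))))
        = ∑ i ∈ Finset.Icc 1 n, (i : ℤ) * ((i : ℤ) + (1 - (s : ℤ))) := by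
      have e1 : Finset.Icc 1 (s - 1) = Finset.Ico 1 s := by
        rw [← Finset.Ico_add_one_right_eq_Icc]
        congr 1
        omega
      have e2 : Finset.Icc s n = Finset.Ico s (n + 1) := by rw [Finset.Ico_add_one_right_eq_Icc]
      have e3 : Finset.Icc 1 n = Finset.Ico 1 (n + 1) := by rw [Finset.Ico_add_one_right_eq_Icc]
      rw [e1, e2, e3]
      exact Finset.sum_Ico_consecutive _ (by omega) (by omega)
    have hGn := sumG (1 - (s : ℤ)) n
    have hGs := sumG (1 - (s : ℤ)) (s - 1)
    have hcast : ((s - 1 : ℕ) : ℤ) = (s : ℤ) - 1 := by omega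
    rw [hcast] at hGs
    have key : ((n : ℤ) - s + 1) * ((n : ℤ) - s + 2) * ((s : ℤ) + 2 * n)
        = 6 * ∑ i ∈ Finset.Icc s n, (i : ℤ) * ((i : ℤ) + (1 - (s : ℤ))) := by
      have h6B : 6 * ∑ i ∈ Finset.Icc s n, (i : ℤ) * ((i : ℤ) + (1 - (s : ℤ)))
          = ((n : ℤ) * (n + 1) * (2 * n + 1) + 3 * (1 - (s : ℤ)) * n * (n + 1))
            - (((s : ℤ) - 1) * ((s : ℤ) - 1 + 1) * (2 * ((s : ℤ) - 1) + 1)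
              + 3 * (1 - (s : ℤ)) * ((s : ℤ) - 1) * ((s : ℤ) - 1 + 1)) := by linarith
      linear_combination -h6B
    linarith
end

section
/- Let n = 3k+1 with k ≥ 1 a natural number. Then: (a) every downhill weighing a : {1,…,n} → ℤ (a(1) > … > a(n)) with Σ_{i=1}^n i·a(i) ∈ {0, −1} has total weight Σ_{i=1}^n i·|a(i)| ≥ (8n³+12n²−12n−8)/81; and (b) there exists a downhill weighing a with Σ_{i=1}^n i·a(i) = 0 (a balance) whose total weight equals (8n³+12n²−12n−8)/81. Hence the minimum total weight of a downhill weighing that is balanced or a tight imbalance is (8n³+12n²−12n−8)/81, achieved by a balance. -/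
/-!
Put `m = 2k`, so `n = m + k + 1`. Along a downhill weighing the multiplicities drop by at least
one per step. If `a(m) ≥ 1`, then `a(i) ≥ m + 1 - i` for `i ≤ m`, so the left pan weighs at
least `L = Σ_{i ≤ m} i (m + 1 - i) = m (m + 1) (m + 2) / 6`; the total weight, twice the left
pan minus `S ≤ 0`, is then at least `2L`, which is the bound. If `a(m) ≤ 0`, then
`a(i) ≤ m - i` for `i > m`, so the right pan weighs at least
`R = Σ_{m < i ≤ n} i (i - m) = (k + 1) (k + 2) (8k + 3) / 6`; the total weight, twice the right
pan plus `S ≥ -1`, is then at least `2R - 1 > 2L`. The balance `a(i) = m + 1 - i` attains the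
bound, since `Σ_{i ≤ n} i (c - i)` vanishes exactly for `c = (2n + 1) / 3 = m + 1`.
-/

open Finset

def Downhill (n : ℕ) (a : ℕ → ℤ) : Prop :=
  ∀ i j : ℕ, 1 ≤ i → i < j → j ≤ n → a j < a i

theorem downhill_const_sub (n : ℕ) (c : ℤ) : Downhill n fun i => c - i := by
  intro i j _ hij _
  have : (i : ℤ) < j := by exact_mod_cast hij
  linarith

namespace Downhill

variable {n : ℕ} {a : ℕ → ℤ}

theorem add_sub_le (ha : Downhill n a) {i j : ℕ} (hi : 1 ≤ i) (hij : i ≤ j) (hj : j ≤ n) :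
    a j + (j - i) ≤ a i := by
  induction j, hij using Nat.le_induction with
  | base => simp
  | succ j hij ih =>
    have := ha j (j + 1) (hi.trans hij) j.lt_succ_self hj
    have := ih (by omega)
    push_cast
    linarith

theorem sum_Icc_le_sum_mul_posPart (ha : Downhill n a) {m : ℕ} (hm : m ≤ n) (h : 1 ≤ a m) :
    ∑ i ∈ Icc 1 m, (i : ℤ) * (m + 1 - i) ≤ ∑ i ∈ Icc 1 n, (i : ℤ) * (a i)⁺ := by
  calc ∑ i ∈ Icc 1 m, (i : ℤ) * (m + 1 - i)
      ≤ ∑ i ∈ Icc 1 m, (i : ℤ) * (a i)⁺ := by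
        refine sum_le_sum fun i hi => ?_
        obtain ⟨hi1, him⟩ := mem_Icc.mp hi
        have := ha.add_sub_le hi1 him hm
        have := le_posPart (a i)
        exact mul_le_mul_of_nonneg_left (by linarith) i.cast_nonneg
    _ ≤ ∑ i ∈ Icc 1 n, (i : ℤ) * (a i)⁺ :=
        sum_le_sum_of_subset_of_nonneg (Icc_subset_Icc_right hm)
          fun i _ _ => mul_nonneg i.cast_nonneg (posPart_nonneg _)

theorem sum_Ioc_le_sum_mul_negPart (ha : Downhill n a) {m : ℕ} (hm : 1 ≤ m) (h : a m ≤ 0) :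
    ∑ i ∈ Ioc m n, (i : ℤ) * (i - m) ≤ ∑ i ∈ Icc 1 n, (i : ℤ) * (a i)⁻ := by
  calc ∑ i ∈ Ioc m n, (i : ℤ) * (i - m)
      ≤ ∑ i ∈ Ioc m n, (i : ℤ) * (a i)⁻ := by
        refine sum_le_sum fun i hi => ?_
        obtain ⟨hmi, hin⟩ := mem_Ioc.mp hi
        have := ha.add_sub_le hm hmi.le hin
        have := neg_le_negPart (a i)
        exact mul_le_mul_of_nonneg_left (by linarith) i.cast_nonneg
    _ ≤ ∑ i ∈ Icc 1 n, (i : ℤ) * (a i)⁻ :=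
        sum_le_sum_of_subset_of_nonneg (fun i hi => by simp only [mem_Ioc, mem_Icc] at hi ⊢; omega)
          fun i _ _ => mul_nonneg i.cast_nonneg (negPart_nonneg _)

end Downhill

section WeightIdentities

variable {ι : Type*} (s : Finset ι) (w a : ι → ℤ)

theorem sum_mul_abs_add_sum_mul :
    ∑ i ∈ s, w i * |a i| + ∑ i ∈ s, w i * a i = 2 * ∑ i ∈ s, w i * (a i)⁺ := by
  rw [← sum_add_distrib, mul_sum]
  refine sum_congr rfl fun i _ => ?_
  rw [← mul_add, abs_add_eq_two_nsmul_posPart, two_nsmul]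
  ring

theorem sum_mul_abs_sub_sum_mul :
    ∑ i ∈ s, w i * |a i| - ∑ i ∈ s, w i * a i = 2 * ∑ i ∈ s, w i * (a i)⁻ := by
  rw [← sum_sub_distrib, mul_sum]
  refine sum_congr rfl fun i _ => ?_
  rw [← mul_sub, abs_sub_eq_two_nsmul_negPart, two_nsmul]
  ring

end WeightIdentities

theorem sum_Icc_mul_const_sub (c : ℤ) (n : ℕ) :
    6 * ∑ i ∈ Icc 1 n, (i : ℤ) * (c - i) = n * (n + 1) * (3 * c - 2 * n - 1) := by
  induction n with
  | zero => simp
  | succ n ih =>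
    rw [sum_Icc_succ_top (by omega), mul_add, ih]
    push_cast
    ring

theorem sum_Ioc_mul_sub_const {m n : ℕ} (h : m ≤ n) :
    6 * ∑ i ∈ Ioc m n, (i : ℤ) * (i - m) = (n - m) * (n - m + 1) * (2 * n + m + 1) := by
  induction n, h using Nat.le_induction with
  | base => simp
  | succ n hmn ih =>
    rw [sum_Ioc_succ_top hmn, mul_add, ih]
    push_cast
    ring

theorem sum_Icc_mul_posPart_sub (m n : ℕ) (h : m ≤ n) :
    ∑ i ∈ Icc 1 n, (i : ℤ) * ((m + 1 : ℤ) - i)⁺ = ∑ i ∈ Icc 1 m, (i : ℤ) * (m + 1 - i) := by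
  symm
  refine sum_subset_zero_on_sdiff (Icc_subset_Icc_right h) (fun i hi => ?_) (fun i hi => ?_)
  · obtain ⟨hin, him⟩ := mem_sdiff.mp hi
    simp only [mem_Icc, not_and, not_le] at hin him
    have : (m : ℤ) + 1 ≤ i := by exact_mod_cast him hin.1
    rw [posPart_eq_zero.mpr (by linarith), mul_zero]
  · have : (i : ℤ) ≤ m := by exact_mod_cast (mem_Icc.mp hi).2
    rw [posPart_eq_self.mpr (by linarith)]

/-- For `n = 3k+1`, the minimum total weight of a downhill weighing that is a
balance or a tight imbalance equals `(8n³+12n²−12n−8)/81`, achieved by a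
balance. (Stated with both sides multiplied by 81.) -/
theorem min_weight_three_k_plus_one (k n : ℕ) (hk : 1 ≤ k) (hn : n = 3 * k + 1) :
    (∀ a : ℕ → ℤ, (∀ i j : ℕ, 1 ≤ i → i < j → j ≤ n → a j < a i) →
      (∑ i ∈ Finset.Icc 1 n, (i : ℤ) * a i = 0 ∨
        ∑ i ∈ Finset.Icc 1 n, (i : ℤ) * a i = -1) →
      8 * (n : ℤ) ^ 3 + 12 * (n : ℤ) ^ 2 - 12 * (n : ℤ) - 8 ≤
        81 * ∑ i ∈ Finset.Icc 1 n, (i : ℤ) * |a i|) ∧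
    (∃ a : ℕ → ℤ, (∀ i j : ℕ, 1 ≤ i → i < j → j ≤ n → a j < a i) ∧
      ∑ i ∈ Finset.Icc 1 n, (i : ℤ) * a i = 0 ∧
      81 * ∑ i ∈ Finset.Icc 1 n, (i : ℤ) * |a i| =
        8 * (n : ℤ) ^ 3 + 12 * (n : ℤ) ^ 2 - 12 * (n : ℤ) - 8) := by
  subst hn
  have hm : 2 * k ≤ 3 * k + 1 := by omega
  have hpeak := sum_Icc_mul_const_sub ((2 * k : ℕ) + 1) (2 * k)
  refine ⟨fun a (ha : Downhill _ a) hS => ?_, ⟨fun i => (2 * k : ℕ) + 1 - i, downhill_const_sub _ _, ?_⟩⟩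
  · have hS' : -1 ≤ ∑ i ∈ Icc 1 (3 * k + 1), (i : ℤ) * a i ∧
        ∑ i ∈ Icc 1 (3 * k + 1), (i : ℤ) * a i ≤ 0 := by
      rcases hS with h | h <;> rw [h] <;> norm_num
    rcases le_or_gt (a (2 * k)) 0 with hneg | hpos
    · have hR := ha.sum_Ioc_le_sum_mul_negPart (by omega) hneg
      have hW := sum_mul_abs_sub_sum_mul (Icc 1 (3 * k + 1)) (fun i => (i : ℤ)) a
      have htail := sum_Ioc_mul_sub_const hm
      push_cast at hR hW htail ⊢
      nlinarith
    · have hL := ha.sum_Icc_le_sum_mul_posPart hm hpos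
      have hW := sum_mul_abs_add_sum_mul (Icc 1 (3 * k + 1)) (fun i => (i : ℤ)) a
      push_cast at hL hW hpeak ⊢
      linarith
  · have hS := sum_Icc_mul_const_sub ((2 * k : ℕ) + 1) (3 * k + 1)
    have hW := sum_mul_abs_add_sum_mul (Icc 1 (3 * k + 1)) (fun i => (i : ℤ))
      fun i => (2 * k : ℕ) + 1 - i
    rw [sum_Icc_mul_posPart_sub _ _ hm] at hW
    push_cast at hS hW hpeak ⊢
    constructor <;> linarith
end

section
/- Let n = 3k with k ≥ 1 a natural number. Then: (a) every downhill weighing a : {1,…,n} → ℤ (a(1) > … > a(n)) with Σ_{i=1}^n i·a(i) ∈ {0, −1} has total weight Σ_{i=1}^n i·|a(i)| ≥ (8n³+27n²+9n−81)/81; and (b) there exists a downhill weighing a with Σ_{i=1}^n i·a(i) = −1 (a tight imbalance) whose total weight equals (8n³+27n²+9n−81)/81. Hence the minimum total weight of a downhill weighing that is balanced or a tight imbalance is (8n³+27n²+9n−81)/81, achieved by a tight imbalance. -/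
open Finset

private lemma sum_id' (n : ℕ) : 2 * ∑ i ∈ Icc 1 n, (i:ℤ) = n*(n+1) := by
  induction n with
  | zero => simp
  | succ m ih =>
    rw [Finset.sum_Icc_succ_top (by omega : 1 ≤ m + 1)]
    push_cast; push_cast at ih; linarith

private lemma sum_sq' (n : ℕ) : 6 * ∑ i ∈ Icc 1 n, (i:ℤ)^2 = n*(n+1)*(2*n+1) := by
  induction n with
  | zero => simp
  | succ m ih =>
    rw [Finset.sum_Icc_succ_top (by omega : 1 ≤ m + 1)]
    push_cast; push_cast at ih; ring_nf; ring_nf at ih; linarith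

private lemma split_Icc' (t n : ℕ) (ht : t ≤ n) (f : ℕ → ℤ) :
    ∑ i ∈ Icc 1 t, f i + ∑ i ∈ Icc (t+1) n, f i = ∑ i ∈ Icc 1 n, f i := by
  rw [show Icc 1 t = Ioc 0 t from Finset.Icc_add_one_left_eq_Ioc 0 t,
      show Icc (t+1) n = Ioc t n from Finset.Icc_add_one_left_eq_Ioc t n,
      show Icc 1 n = Ioc 0 n from Finset.Icc_add_one_left_eq_Ioc 0 n]
  exact Finset.sum_Ioc_consecutive _ (Nat.zero_le t) ht

private lemma sumB_closed (t n : ℕ) (ht : t ≤ n) :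
    6 * ∑ i ∈ Icc (t+1) n, (i:ℤ)*((i:ℤ)-(t:ℤ)) =
      (n:ℤ)*(n+1)*(2*n+1) - 3*t*((n:ℤ)*(n+1)) + (t:ℤ)^3 - t := by
  have hsplit := split_Icc' t n ht (fun i => (i:ℤ)*((i:ℤ)-(t:ℤ)))
  have e1 : ∑ i ∈ Icc 1 n, ((i:ℤ)*((i:ℤ)-(t:ℤ)))
      = (∑ i ∈ Icc 1 n, (i:ℤ)^2) - t * ∑ i ∈ Icc 1 n, (i:ℤ) := by
    rw [Finset.mul_sum, ← Finset.sum_sub_distrib]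
    apply Finset.sum_congr rfl; intros; ring
  have e2 : ∑ i ∈ Icc 1 t, ((i:ℤ)*((i:ℤ)-(t:ℤ)))
      = (∑ i ∈ Icc 1 t, (i:ℤ)^2) - t * ∑ i ∈ Icc 1 t, (i:ℤ) := by
    rw [Finset.mul_sum, ← Finset.sum_sub_distrib]
    apply Finset.sum_congr rfl; intros; ring
  have q1 := sum_sq' n; have q2 := sum_sq' t
  have l1 := sum_id' n; have l2 := sum_id' t
  linear_combination 6*hsplit + 6*e1 - 6*e2 + q1 - q2 - 3*(t:ℤ)*l1 + 3*(t:ℤ)*l2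

private lemma sumA_closed (t : ℕ) :
    6 * ∑ i ∈ Icc 1 t, (i:ℤ)*((t:ℤ)-(i:ℤ)) = (t:ℤ)^3 - t := by
  have e : ∑ i ∈ Icc 1 t, ((i:ℤ)*((t:ℤ)-(i:ℤ)))
      = t * (∑ i ∈ Icc 1 t, (i:ℤ)) - ∑ i ∈ Icc 1 t, (i:ℤ)^2 := by
    rw [Finset.mul_sum, ← Finset.sum_sub_distrib]
    apply Finset.sum_congr rfl; intros; ring
  linear_combination 6*e + 3*(t:ℤ)*(sum_id' t) - sum_sq' t

private lemma key_arith (k t W S : ℤ) (hk : 1 ≤ k) (ht0 : 0 ≤ t) (htn : t ≤ 3*k)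
    (hS0 : S ≤ 0) (hS1 : -1 ≤ S)
    (hA : t^3 - t ≤ 3*(W + S))
    (hB : (3*k)*(3*k+1)*(2*(3*k)+1) - 3*t*(3*k)*(3*k+1) + t^3 - t ≤ 3*(W - S)) :
    8*(3*k)^3 + 27*(3*k)^2 + 9*(3*k) - 81 ≤ 81 * W := by
  rcases le_or_gt t (2*k) with h | h
  · nlinarith [mul_nonneg (sub_nonneg.2 h)
      (by nlinarith : (0:ℤ) ≤ -(3*k-t)^2 + 8*k*(3*k-t) + 8*k^2 + 9*k + 1), sq_nonneg (t-k)]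
  · nlinarith [mul_nonneg (by linarith : (0:ℤ) ≤ t - (2*k+1))
      (by nlinarith : (0:ℤ) ≤ t^2 + t*(2*k+1) + (2*k+1)^2 - 1), sq_nonneg t]

private lemma lower_bound (n : ℕ) (a : ℕ → ℤ) (k : ℕ) (hk : 1 ≤ k) (hn : n = 3 * k)
    (hdec : ∀ i j : ℕ, 1 ≤ i → i < j → j ≤ n → a j < a i)
    (hS : ∑ i ∈ Icc 1 n, (i : ℤ) * a i = 0 ∨ ∑ i ∈ Icc 1 n, (i : ℤ) * a i = -1) :
    8 * (n : ℤ) ^ 3 + 27 * (n : ℤ) ^ 2 + 9 * (n : ℤ) - 81 ≤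
      81 * ∑ i ∈ Icc 1 n, (i : ℤ) * |a i| := by
  have hgap : ∀ d i : ℕ, 1 ≤ i → i + d ≤ n → a (i + d) + d ≤ a i := by
    intro d
    induction d with
    | zero => intro i _ _; simp
    | succ e ih =>
      intro i h1 h2
      have h3 := ih i h1 (by omega)
      have h4 : a (i + e + 1) < a (i + e) := hdec (i+e) (i+e+1) (by omega) (by omega) (by omega)
      have h5 : i + (e + 1) = i + e + 1 := by omega
      rw [h5]
      push_cast
      push_cast at h3
      omega
  set t := ((Icc 1 n).filter (fun i => 0 ≤ a i)).card with ht_def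
  have ht : t ≤ n := by
    have := Finset.card_le_card (Finset.filter_subset (fun i => 0 ≤ a i) (Icc 1 n))
    simpa using this
  have hfilt : ∀ i : ℕ, 1 ≤ i → i ≤ n → (0 ≤ a i ↔ i ≤ t) := by
    intro i hi1 hin
    constructor
    · intro hai
      have hsub : Icc 1 i ⊆ (Icc 1 n).filter (fun j => 0 ≤ a j) := by
        intro j hj
        simp only [mem_Icc] at hj
        simp only [mem_filter, mem_Icc]
        refine ⟨⟨hj.1, by omega⟩, ?_⟩
        have h5 := hgap (i - j) j hj.1 (by omega)
        rw [show j + (i - j) = i by omega] at h5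
        have h6 : (0:ℤ) ≤ ((i - j : ℕ) : ℤ) := by positivity
        linarith
      have := Finset.card_le_card hsub
      simpa [ht_def] using this
    · intro hit
      by_contra hai
      push_neg at hai
      have hsub : (Icc 1 n).filter (fun j => 0 ≤ a j) ⊆ Icc 1 (i - 1) := by
        intro j hj
        simp only [mem_filter, mem_Icc] at hj
        simp only [mem_Icc]
        refine ⟨hj.1.1, ?_⟩
        by_contra hji
        push_neg at hji
        have h5 := hgap (j - i) i hi1 (by omega)
        rw [show i + (j - i) = j by omega] at h5
        have h6 : (0:ℤ) ≤ ((j - i : ℕ) : ℤ) := by positivity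
        linarith [hj.2]
      have := Finset.card_le_card hsub
      rw [← ht_def] at this
      simp only [Nat.card_Icc] at this
      omega
  have h1 : ∀ i : ℕ, 1 ≤ i → i ≤ t → (t:ℤ) - i ≤ a i := by
    intro i hi1 hit
    have ht1 : 1 ≤ t := le_trans hi1 hit
    have hat : 0 ≤ a t := (hfilt t ht1 ht).2 le_rfl
    have h5 := hgap (t - i) i hi1 (by omega)
    rw [show i + (t - i) = t by omega] at h5
    have h6 : ((t - i : ℕ) : ℤ) = (t:ℤ) - i := by push_cast; omega
    rw [h6] at h5
    linarith
  have h2 : ∀ i : ℕ, t < i → i ≤ n → a i ≤ (t:ℤ) - i := by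
    intro i hti hin
    have hat1 : a (t+1) ≤ -1 := by
      have h7 : ¬ (0 ≤ a (t+1)) := by
        intro h
        have := (hfilt (t+1) (by omega) (by omega)).1 h
        omega
      omega
    have h5 := hgap (i - (t+1)) (t+1) (by omega) (by omega)
    rw [show t + 1 + (i - (t+1)) = i by omega] at h5
    have h6 : ((i - (t+1) : ℕ) : ℤ) = (i:ℤ) - t - 1 := by push_cast; omega
    rw [h6] at h5
    linarith
  set W := ∑ i ∈ Icc 1 n, (i : ℤ) * |a i| with hW
  set S := ∑ i ∈ Icc 1 n, (i : ℤ) * a i with hSdef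
  have hbA : 2 * ∑ i ∈ Icc 1 t, (i:ℤ) * ((t:ℤ) - i) ≤ W + S := by
    have e1 : W + S = ∑ i ∈ Icc 1 n, (i:ℤ) * (|a i| + a i) := by
      rw [hW, hSdef, ← Finset.sum_add_distrib]
      apply Finset.sum_congr rfl; intro i _; ring
    have e2 : ∑ i ∈ Icc 1 t, (i:ℤ) * (|a i| + a i) ≤ ∑ i ∈ Icc 1 n, (i:ℤ) * (|a i| + a i) := by
      apply Finset.sum_le_sum_of_subset_of_nonneg (Finset.Icc_subset_Icc_right ht)
      intro i hi _
      have hna : -|a i| ≤ a i := neg_abs_le _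
      have hnn : (0:ℤ) ≤ |a i| + a i := by linarith
      have hi0 : (0:ℤ) ≤ i := by positivity
      positivity
    have e3 : ∑ i ∈ Icc 1 t, (i:ℤ) * (2 * ((t:ℤ) - i)) ≤ ∑ i ∈ Icc 1 t, (i:ℤ) * (|a i| + a i) := by
      apply Finset.sum_le_sum
      intro i hi
      simp only [mem_Icc] at hi
      have ha := h1 i hi.1 hi.2
      have hsa : a i ≤ |a i| := le_abs_self _
      have hi0 : (0:ℤ) ≤ i := by positivity
      have hle : 2 * ((t:ℤ) - i) ≤ |a i| + a i := by linarith
      exact mul_le_mul_of_nonneg_left hle hi0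
    calc 2 * ∑ i ∈ Icc 1 t, (i:ℤ) * ((t:ℤ) - i)
        = ∑ i ∈ Icc 1 t, (i:ℤ) * (2 * ((t:ℤ) - i)) := by
          rw [Finset.mul_sum]; apply Finset.sum_congr rfl; intro i _; ring
      _ ≤ ∑ i ∈ Icc 1 t, (i:ℤ) * (|a i| + a i) := e3
      _ ≤ ∑ i ∈ Icc 1 n, (i:ℤ) * (|a i| + a i) := e2
      _ = W + S := e1.symm
  have hbB : 2 * ∑ i ∈ Icc (t+1) n, (i:ℤ) * ((i:ℤ) - t) ≤ W - S := by
    have e1 : W - S = ∑ i ∈ Icc 1 n, (i:ℤ) * (|a i| - a i) := by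
      rw [hW, hSdef, ← Finset.sum_sub_distrib]
      apply Finset.sum_congr rfl; intro i _; ring
    have e2 : ∑ i ∈ Icc (t+1) n, (i:ℤ) * (|a i| - a i) ≤ ∑ i ∈ Icc 1 n, (i:ℤ) * (|a i| - a i) := by
      apply Finset.sum_le_sum_of_subset_of_nonneg (Finset.Icc_subset_Icc (by omega) le_rfl)
      intro i hi _
      have hna : a i ≤ |a i| := le_abs_self _
      have hnn : (0:ℤ) ≤ |a i| - a i := by linarith
      have hi0 : (0:ℤ) ≤ i := by positivity
      positivity
    have e3 : ∑ i ∈ Icc (t+1) n, (i:ℤ) * (2 * ((i:ℤ) - t)) ≤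
        ∑ i ∈ Icc (t+1) n, (i:ℤ) * (|a i| - a i) := by
      apply Finset.sum_le_sum
      intro i hi
      simp only [mem_Icc] at hi
      have ha := h2 i (by omega) hi.2
      have hsa : -|a i| ≤ a i := neg_abs_le _
      have hi0 : (0:ℤ) ≤ i := by positivity
      have hle : 2 * ((i:ℤ) - t) ≤ |a i| - a i := by linarith
      exact mul_le_mul_of_nonneg_left hle hi0
    calc 2 * ∑ i ∈ Icc (t+1) n, (i:ℤ) * ((i:ℤ) - t)
        = ∑ i ∈ Icc (t+1) n, (i:ℤ) * (2 * ((i:ℤ) - t)) := by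
          rw [Finset.mul_sum]; apply Finset.sum_congr rfl; intro i _; ring
      _ ≤ ∑ i ∈ Icc (t+1) n, (i:ℤ) * (|a i| - a i) := e3
      _ ≤ ∑ i ∈ Icc 1 n, (i:ℤ) * (|a i| - a i) := e2
      _ = W - S := e1.symm
  have hA6 := sumA_closed t
  have hB6 := sumB_closed t n ht
  have hnz : (n:ℤ) = 3*(k:ℤ) := by exact_mod_cast congrArg (Nat.cast : ℕ → ℤ) hn
  have hk' : (1:ℤ) ≤ (k:ℤ) := by exact_mod_cast hk
  have ht0 : (0:ℤ) ≤ (t:ℤ) := by positivity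
  have htn : (t:ℤ) ≤ 3*(k:ℤ) := by rw [← hnz]; exact_mod_cast ht
  have hS0 : S ≤ 0 := by rcases hS with h | h <;> omega
  have hS1 : -1 ≤ S := by rcases hS with h | h <;> omega
  have hAle : (t:ℤ)^3 - t ≤ 3*(W + S) := by linarith
  have hBle : (3*(k:ℤ))*(3*(k:ℤ)+1)*(2*(3*(k:ℤ))+1) - 3*(t:ℤ)*(3*(k:ℤ))*(3*(k:ℤ)+1)
      + (t:ℤ)^3 - t ≤ 3*(W - S) := by
    rw [hnz] at hB6
    nlinarith [hbB, hB6]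
  have := key_arith (k:ℤ) (t:ℤ) W S hk' ht0 htn hS0 hS1 hAle hBle
  rw [hnz]
  linarith

private lemma construction (k : ℕ) (hk : 1 ≤ k) :
    (∃ a : ℕ → ℤ, (∀ i j : ℕ, 1 ≤ i → i < j → j ≤ 3*k → a j < a i) ∧
      ∑ i ∈ Finset.Icc 1 (3*k), (i : ℤ) * a i = -1 ∧
      81 * ∑ i ∈ Finset.Icc 1 (3*k), (i : ℤ) * |a i| =
        8 * ((3*k : ℕ) : ℤ) ^ 3 + 27 * ((3*k : ℕ) : ℤ) ^ 2 + 9 * ((3*k : ℕ) : ℤ) - 81) := by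
  obtain ⟨c, hc⟩ : Even ((k:ℤ) * ((k:ℤ)+1)) := Int.even_mul_succ_self (k:ℤ)
  set D : ℤ := 3*c - (k:ℤ) - 1 with hDdef
  have hD : 2*D = 3*(k:ℤ)^2 + (k:ℤ) - 2 := by rw [hDdef]; linear_combination -3*hc
  have hk' : (1:ℤ) ≤ (k:ℤ) := by exact_mod_cast hk
  have hD0 : 0 ≤ D := by nlinarith
  set a : ℕ → ℤ := fun i => if i = 1 then 2*(k:ℤ) - 1 + D else 2*(k:ℤ) - (i:ℤ) with ha
  have hmem1 : (1:ℕ) ∈ Icc 1 (3*k) := by simp [mem_Icc]; omega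
  have ecorr : ∀ i ∈ Icc 1 (3*k), (i:ℤ) * a i
      = (i:ℤ)*(2*(k:ℤ) - (i:ℤ)) + (if i = 1 then D else 0) := by
    intro i hi
    by_cases h : i = 1
    · subst h; simp [ha]
    · simp [ha, h]
  have ecorrabs : ∀ i ∈ Icc 1 (3*k), (i:ℤ) * |a i|
      = (i:ℤ)*|2*(k:ℤ) - (i:ℤ)| + (if i = 1 then D else 0) := by
    intro i hi
    by_cases h : i = 1
    · subst h
      have h1 : a 1 = 2*(k:ℤ) - 1 + D := by simp [ha]
      have h2 : |a 1| = 2*(k:ℤ) - 1 + D := by rw [h1, abs_of_nonneg]; linarith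
      have h3 : |2*(k:ℤ) - ((1:ℕ):ℤ)| = 2*(k:ℤ) - 1 := by
        rw [abs_of_nonneg] <;> push_cast <;> linarith
      rw [h2, h3]; push_cast; ring
    · simp [ha, h]
  have hcorrsum : ∑ i ∈ Icc 1 (3*k), (if i = 1 then D else 0) = D := by
    rw [Finset.sum_ite_eq' (Icc 1 (3*k)) 1 (fun _ => D), if_pos hmem1]
  have hlinsum : 6 * ∑ i ∈ Icc 1 (3*k), (i:ℤ)*(2*(k:ℤ) - (i:ℤ)) = -9*(k:ℤ)^2 - 3*(k:ℤ) := by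
    have e' : ∑ i ∈ Icc 1 (3*k), ((i:ℤ)*(2*(k:ℤ) - (i:ℤ)))
        = 2*(k:ℤ) * (∑ i ∈ Icc 1 (3*k), (i:ℤ)) - ∑ i ∈ Icc 1 (3*k), (i:ℤ)^2 := by
      rw [Finset.mul_sum, ← Finset.sum_sub_distrib]
      apply Finset.sum_congr rfl; intros; ring
    have l := sum_id' (3*k); have q := sum_sq' (3*k)
    push_cast at l q
    linear_combination 6*e' + 6*(k:ℤ)*l - q
  refine ⟨a, ?_, ?_, ?_⟩
  · intro i j hi hij hjn
    have hj1 : j ≠ 1 := by omega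
    have hij' : (i:ℤ) < (j:ℤ) := by exact_mod_cast hij
    show (if j = 1 then _ else _) < (if i = 1 then _ else _)
    rw [if_neg hj1]
    by_cases h1 : i = 1
    · rw [if_pos h1]
      have : (2:ℤ) ≤ (j:ℤ) := by exact_mod_cast (by omega : 2 ≤ j)
      linarith
    · rw [if_neg h1]; linarith
  · rw [Finset.sum_congr rfl ecorr, Finset.sum_add_distrib, hcorrsum]
    have h6 : (6:ℤ) * (∑ i ∈ Icc 1 (3*k), (i:ℤ)*(2*(k:ℤ) - (i:ℤ)) + D) = -6 := by
      linear_combination hlinsum + 3*hD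
    linarith
  · rw [Finset.sum_congr rfl ecorrabs, Finset.sum_add_distrib, hcorrsum]
    have hsplit := split_Icc' (2*k) (3*k) (by omega) (fun i => (i:ℤ)*|2*(k:ℤ) - (i:ℤ)|)
    have c1 : ∑ i ∈ Icc 1 (2*k), (i:ℤ)*|2*(k:ℤ) - (i:ℤ)|
        = ∑ i ∈ Icc 1 (2*k), (i:ℤ)*(((2*k:ℕ):ℤ) - (i:ℤ)) := by
      apply Finset.sum_congr rfl
      intro i hi
      simp only [mem_Icc] at hi
      have h5 : (i:ℤ) ≤ ((2*k:ℕ):ℤ) := by exact_mod_cast hi.2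
      rw [abs_of_nonneg (by push_cast at h5 ⊢; linarith)]
      push_cast; ring
    have c2 : ∑ i ∈ Icc (2*k+1) (3*k), (i:ℤ)*|2*(k:ℤ) - (i:ℤ)|
        = ∑ i ∈ Icc (2*k+1) (3*k), (i:ℤ)*((i:ℤ) - ((2*k:ℕ):ℤ)) := by
      apply Finset.sum_congr rfl
      intro i hi
      simp only [mem_Icc] at hi
      have h5 : ((2*k:ℕ):ℤ)+1 ≤ (i:ℤ) := by exact_mod_cast hi.1
      rw [abs_of_nonpos (by push_cast at h5 ⊢; linarith)]
      push_cast; ring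
    have hA := sumA_closed (2*k)
    have hB := sumB_closed (2*k) (3*k) (by omega)
    push_cast at hA hB hsplit c1 c2 ⊢
    nlinarith [hsplit, c1, c2, hA, hB, hD]

/-- For `n = 3k`, the minimum total weight of a downhill weighing that is a
balance or a tight imbalance equals `(8n³+27n²+9n−81)/81`, achieved by a
tight imbalance. (Stated with both sides multiplied by 81.) -/
theorem min_weight_three_k (k n : ℕ) (hk : 1 ≤ k) (hn : n = 3 * k) :
    (∀ a : ℕ → ℤ, (∀ i j : ℕ, 1 ≤ i → i < j → j ≤ n → a j < a i) →
      (∑ i ∈ Finset.Icc 1 n, (i : ℤ) * a i = 0 ∨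
        ∑ i ∈ Finset.Icc 1 n, (i : ℤ) * a i = -1) →
      8 * (n : ℤ) ^ 3 + 27 * (n : ℤ) ^ 2 + 9 * (n : ℤ) - 81 ≤
        81 * ∑ i ∈ Finset.Icc 1 n, (i : ℤ) * |a i|) ∧
    (∃ a : ℕ → ℤ, (∀ i j : ℕ, 1 ≤ i → i < j → j ≤ n → a j < a i) ∧
      ∑ i ∈ Finset.Icc 1 n, (i : ℤ) * a i = -1 ∧
      81 * ∑ i ∈ Finset.Icc 1 n, (i : ℤ) * |a i| =
        8 * (n : ℤ) ^ 3 + 27 * (n : ℤ) ^ 2 + 9 * (n : ℤ) - 81) := by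
  constructor
  · intro a hdec hS
    exact lower_bound n a k hk hn hdec hS
  · subst hn
    exact construction k hk
end

section
/- Let n = 3k+2 where k ≥ 1 is odd. Then: (a) every downhill weighing a : {1,…,n} → ℤ (a(1) > … > a(n)) with Σ_{i=1}^n i·a(i) ∈ {0, −1} has total weight Σ_{i=1}^n i·|a(i)| ≥ (8k³+24k²+22k+6)/3; and (b) there exists a downhill weighing a with Σ_{i=1}^n i·a(i) = 0 (a balance) whose total weight equals (8k³+24k²+22k+6)/3. Hence the minimum total weight of a downhill weighing that is balanced or a tight imbalance is (8k³+24k²+22k+6)/3, achieved by a balance. -/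
/-!
Write `S = Σ i·a(i)` and `W = Σ i·|a(i)|`, so that `W = 2 Σ i·a(i)⁺ - S = 2 Σ i·a(i)⁻ + S`.
A downhill `a` drops by at least one per step, i.e. `a(i) + i` is antitone. Put `m = 2k+1`.
If `a(m) > 0` then `a(i) ≥ m + 1 - i` for `i ≤ m`, whence `3W ≥ m(m+1)(m+2) - 3S`; otherwise
`-a(i) ≥ i - m` for `i ≥ m`, whence `3W ≥ (k+1)(k+2)(8k+6) + 3S`. For `-1 ≤ S ≤ 0` both bounds are
at least `(2k+1)(2k+2)(2k+3) = 8k³+24k²+22k+6`. Equality holds for the ramp `a(i) = 2k+2-i` on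
`[1, 3k+1]` completed by `a(3k+2) = -(3k+1)/2` (an integer as `k` is odd), which balances and whose
positive part is exactly the ramp of the first case.
-/

open Finset

section AbsSplit

variable {ι R : Type*} [Ring R] [LinearOrder R] [IsOrderedRing R] (s : Finset ι) (w a : ι → R)

theorem sum_mul_abs_eq_two_mul_sum_mul_posPart_sub :
    ∑ i ∈ s, w i * |a i| = 2 * ∑ i ∈ s, w i * (a i)⁺ - ∑ i ∈ s, w i * a i := by
  rw [mul_sum, ← sum_sub_distrib]
  refine sum_congr rfl fun i _ => ?_
  conv_rhs => arg 2; rw [← posPart_sub_negPart (a i)]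
  rw [← posPart_add_negPart]
  noncomm_ring

theorem sum_mul_abs_eq_two_mul_sum_mul_negPart_add :
    ∑ i ∈ s, w i * |a i| = 2 * ∑ i ∈ s, w i * (a i)⁻ + ∑ i ∈ s, w i * a i := by
  rw [mul_sum, ← sum_add_distrib]
  refine sum_congr rfl fun i _ => ?_
  conv_rhs => arg 2; rw [← posPart_sub_negPart (a i)]
  rw [← posPart_add_negPart]
  noncomm_ring

end AbsSplit

theorem StrictAntiOn.antitoneOn_add_natCast {f : ℕ → ℤ} {p q : ℕ}
    (hf : StrictAntiOn f (Set.Icc p q)) : AntitoneOn (fun i => f i + i) (Set.Icc p q) := by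
  intro i hi j hj hij
  induction j, hij using Nat.le_induction with
  | base => rfl
  | succ j hij ih =>
    have hj' : j ∈ Set.Icc p q := ⟨hi.1.trans hij, (Nat.le_succ j).trans hj.2⟩
    have hstep : f (j + 1) < f j := hf hj' hj (Nat.lt_succ_self j)
    have hprev : f j + j ≤ f i + i := ih hj'
    push_cast
    omega

theorem six_mul_sum_Icc_mul_sub (c : ℤ) (N : ℕ) :
    6 * ∑ i ∈ Icc 1 N, (i : ℤ) * (c - i) = N * (N + 1) * (3 * c - 2 * N - 1) := by
  induction N with
  | zero => simp
  | succ N ih =>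
    rw [sum_Icc_succ_top (by omega), mul_add, ih]
    push_cast
    ring

theorem six_mul_sum_Icc_mul_sub_left (m r : ℕ) :
    6 * ∑ i ∈ Icc m (m + r), (i : ℤ) * (i - m) = r * (r + 1) * (3 * m + 2 * r + 1) := by
  induction r with
  | zero => simp
  | succ r ih =>
    rw [← add_assoc, sum_Icc_succ_top (by omega), mul_add, ih]
    push_cast
    ring

section Downhill

variable {a : ℕ → ℤ} {m n : ℕ}

theorem le_six_mul_sum_mul_posPart (ha : StrictAntiOn a (Set.Icc 1 n)) (hm : 1 ≤ m)
    (hmn : m ≤ n) (hpos : 0 < a m) :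
    (m : ℤ) * (m + 1) * (m + 2) ≤ 6 * ∑ i ∈ Icc 1 n, (i : ℤ) * (a i)⁺ := by
  have hramp : ∀ i ∈ Icc 1 m, (m + 1 - i : ℤ) ≤ (a i)⁺ := fun i hi => by
    have hi := mem_Icc.mp hi
    have hstep : a m + m ≤ a i + i :=
      ha.antitoneOn_add_natCast ⟨hi.1, hi.2.trans hmn⟩ ⟨hm, hmn⟩ hi.2
    linarith [le_posPart (a i)]
  calc (m : ℤ) * (m + 1) * (m + 2) = 6 * ∑ i ∈ Icc 1 m, (i : ℤ) * (m + 1 - i) := by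
        rw [six_mul_sum_Icc_mul_sub]; ring
    _ ≤ 6 * ∑ i ∈ Icc 1 m, (i : ℤ) * (a i)⁺ := by
        gcongr with i hi
        exact hramp i hi
    _ ≤ 6 * ∑ i ∈ Icc 1 n, (i : ℤ) * (a i)⁺ := by
        gcongr

theorem le_six_mul_sum_mul_negPart (ha : StrictAntiOn a (Set.Icc 1 n)) (hm : 1 ≤ m)
    (hmn : m ≤ n) (hnonpos : a m ≤ 0) :
    ((n : ℤ) - m) * (n - m + 1) * (2 * n + m + 1) ≤ 6 * ∑ i ∈ Icc 1 n, (i : ℤ) * (a i)⁻ := by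
  have hramp : ∀ i ∈ Icc m n, (i - m : ℤ) ≤ (a i)⁻ := fun i hi => by
    have hi := mem_Icc.mp hi
    have hstep : a i + i ≤ a m + m :=
      ha.antitoneOn_add_natCast ⟨hm, hmn⟩ ⟨hm.trans hi.1, hi.2⟩ hi.1
    linarith [neg_le_negPart (a i)]
  obtain ⟨r, rfl⟩ := Nat.exists_eq_add_of_le hmn
  calc ((m + r : ℕ) - m : ℤ) * ((m + r : ℕ) - m + 1) * (2 * (m + r : ℕ) + m + 1)
        = 6 * ∑ i ∈ Icc m (m + r), (i : ℤ) * (i - m) := by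
        rw [six_mul_sum_Icc_mul_sub_left]; push_cast; ring
    _ ≤ 6 * ∑ i ∈ Icc m (m + r), (i : ℤ) * (a i)⁻ := by
        gcongr with i hi
        exact hramp i hi
    _ ≤ 6 * ∑ i ∈ Icc 1 (m + r), (i : ℤ) * (a i)⁻ := by
        gcongr

end Downhill

theorem le_three_mul_sum_mul_abs (k : ℕ) {a : ℕ → ℤ}
    (ha : StrictAntiOn a (Set.Icc 1 (3 * k + 2)))
    (hS : ∑ i ∈ Icc 1 (3 * k + 2), (i : ℤ) * a i ∈ Set.Icc (-1) 0) :
    8 * (k : ℤ) ^ 3 + 24 * (k : ℤ) ^ 2 + 22 * (k : ℤ) + 6 ≤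
      3 * ∑ i ∈ Icc 1 (3 * k + 2), (i : ℤ) * |a i| := by
  obtain ⟨hS₁, hS₀⟩ := hS
  rcases lt_or_ge 0 (a (2 * k + 1)) with hpos | hnonpos
  · have := le_six_mul_sum_mul_posPart ha (by omega) (by omega) hpos
    rw [sum_mul_abs_eq_two_mul_sum_mul_posPart_sub]
    push_cast at this
    linarith
  · have := le_six_mul_sum_mul_negPart ha (by omega) (by omega) hnonpos
    rw [sum_mul_abs_eq_two_mul_sum_mul_negPart_add]
    push_cast at this
    nlinarith

def balancedRamp (k i : ℕ) : ℤ :=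
  if i ≤ 3 * k + 1 then 2 * k + 2 - i else -((3 * k + 1) / 2)

theorem strictAntiOn_balancedRamp (k : ℕ) :
    StrictAntiOn (balancedRamp k) (Set.Icc 1 (3 * k + 2)) := by
  intro i hi j hj hij
  simp only [Set.mem_Icc] at hi hj
  unfold balancedRamp
  split_ifs <;> omega

theorem sum_mul_balancedRamp {k : ℕ} (hk : Odd k) :
    ∑ i ∈ Icc 1 (3 * k + 2), (i : ℤ) * balancedRamp k i = 0 := by
  have hramp := six_mul_sum_Icc_mul_sub (2 * k + 2) (3 * k + 1)
  rw [sum_Icc_succ_top (by omega), balancedRamp, if_neg (by omega),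
    sum_congr rfl fun i hi => by rw [balancedRamp, if_pos (mem_Icc.mp hi).2]]
  obtain ⟨c, rfl⟩ := hk
  have hhalf : (3 * (2 * c + 1 : ℤ) + 1) / 2 = 3 * c + 2 := by omega
  push_cast at hramp ⊢
  rw [hhalf]
  linarith

theorem six_mul_sum_mul_posPart_balancedRamp (k : ℕ) :
    6 * ∑ i ∈ Icc 1 (3 * k + 2), (i : ℤ) * (balancedRamp k i)⁺ =
      (2 * k + 1) * (2 * k + 2) * (2 * k + 3) := by
  have hsupp : ∑ i ∈ Icc 1 (3 * k + 2), (i : ℤ) * (balancedRamp k i)⁺ =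
      ∑ i ∈ Icc 1 (2 * k + 1), (i : ℤ) * (2 * k + 2 - i) := by
    symm
    refine sum_subset_zero_on_sdiff (Icc_subset_Icc_right (by omega)) (fun i hi => ?_)
      (fun i hi => ?_)
    · simp only [mem_sdiff, mem_Icc] at hi
      rw [posPart_eq_zero.mpr (by unfold balancedRamp; split_ifs <;> omega), mul_zero]
    · simp only [mem_Icc] at hi
      rw [posPart_eq_self.mpr (by unfold balancedRamp; split_ifs <;> omega), balancedRamp,
        if_pos (by omega)]
  rw [hsupp, six_mul_sum_Icc_mul_sub]
  push_cast
  ring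

theorem min_weight_three_k_plus_two_odd_general (k n : ℕ) (hodd : Odd k)
    (hn : n = 3 * k + 2) :
    (∀ a : ℕ → ℤ, (∀ i j : ℕ, 1 ≤ i → i < j → j ≤ n → a j < a i) →
      (∑ i ∈ Finset.Icc 1 n, (i : ℤ) * a i = 0 ∨
        ∑ i ∈ Finset.Icc 1 n, (i : ℤ) * a i = -1) →
      8 * (k : ℤ) ^ 3 + 24 * (k : ℤ) ^ 2 + 22 * (k : ℤ) + 6 ≤
        3 * ∑ i ∈ Finset.Icc 1 n, (i : ℤ) * |a i|) ∧
    (∃ a : ℕ → ℤ, (∀ i j : ℕ, 1 ≤ i → i < j → j ≤ n → a j < a i) ∧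
      ∑ i ∈ Finset.Icc 1 n, (i : ℤ) * a i = 0 ∧
      3 * ∑ i ∈ Finset.Icc 1 n, (i : ℤ) * |a i| =
        8 * (k : ℤ) ^ 3 + 24 * (k : ℤ) ^ 2 + 22 * (k : ℤ) + 6) := by
  subst hn
  refine ⟨fun a ha hS =>
      le_three_mul_sum_mul_abs k (fun i hi j hj hij => ha i j hi.1 hij hj.2) ?_,
    balancedRamp k, fun i j hi hij hj => strictAntiOn_balancedRamp k ⟨hi, hij.le.trans hj⟩
      ⟨hi.trans hij.le, hj⟩ hij, sum_mul_balancedRamp hodd, ?_⟩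
  · rcases hS with hS | hS <;> simp [hS]
  · rw [sum_mul_abs_eq_two_mul_sum_mul_posPart_sub, sum_mul_balancedRamp hodd]
    linear_combination six_mul_sum_mul_posPart_balancedRamp k

/-- For `n = 3k+2` with `k` odd, the minimum total weight of a downhill
weighing that is a balance or a tight imbalance equals
`(8k³+24k²+22k+6)/3`, achieved by a balance. (Stated with both sides
multiplied by 3.) -/
theorem min_weight_three_k_plus_two_odd (k n : ℕ) (hk : 1 ≤ k) (hodd : Odd k)
    (hn : n = 3 * k + 2) :
    (∀ a : ℕ → ℤ, (∀ i j : ℕ, 1 ≤ i → i < j → j ≤ n → a j < a i) →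
      (∑ i ∈ Finset.Icc 1 n, (i : ℤ) * a i = 0 ∨
        ∑ i ∈ Finset.Icc 1 n, (i : ℤ) * a i = -1) →
      8 * (k : ℤ) ^ 3 + 24 * (k : ℤ) ^ 2 + 22 * (k : ℤ) + 6 ≤
        3 * ∑ i ∈ Finset.Icc 1 n, (i : ℤ) * |a i|) ∧
    (∃ a : ℕ → ℤ, (∀ i j : ℕ, 1 ≤ i → i < j → j ≤ n → a j < a i) ∧
      ∑ i ∈ Finset.Icc 1 n, (i : ℤ) * a i = 0 ∧
      3 * ∑ i ∈ Finset.Icc 1 n, (i : ℤ) * |a i| =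
        8 * (k : ℤ) ^ 3 + 24 * (k : ℤ) ^ 2 + 22 * (k : ℤ) + 6) :=
  min_weight_three_k_plus_two_odd_general k n hodd hn
end

section
/- Let n = 3k+2 where k is even and n > 50. Then: (a) every downhill weighing a : {1,…,n} → ℤ (a(1) > … > a(n)) with Σ_{i=1}^n i·a(i) ∈ {0, −1} has total weight Σ_{i=1}^n i·|a(i)| ≥ (8k³+24k²+22k+6)/3; and (b) there exists a downhill weighing a with Σ_{i=1}^n i·a(i) = 0 (a balance) whose total weight equals (8k³+24k²+22k+6)/3. Hence the minimum total weight of a downhill weighing that is balanced or a tight imbalance is (8k³+24k²+22k+6)/3, achieved by a balance. -/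
/-!
Write `ℓ_p` for the weighing `i ↦ p - i`, `S` for the balance sum, `W` for the total weight,
and `q = 2k + 2`, so that `8k³ + 24k² + 22k + 6 = q³ - q`.

Lower bound: let `p` be the last index with `a p ≥ 0`. As `a` strictly decreases over `ℤ`,
`a i - (p - i)` has the sign of `p - i`, so `W a = W ℓ_p + W (a - ℓ_p) ≥ W ℓ_p + |S a - S ℓ_p|`.
Together with `3 (W ℓ_p + S ℓ_p) = p³ - p` this gives `3 W a ≥ p³ - p` if `p ≥ q`, and
`3 W a ≥ p³ - p - 6 S ℓ_p - 3` if `p < q`; both bounds are at least `q³ - q`.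

Construction: lowering `ℓ_q` by a nondecreasing `c ≥ 0` supported where `ℓ_q ≤ 0` lowers the
balance sum by `S c` and raises the weight by `S c`, so it suffices that `S c = S ℓ_q`.
For `k = 2m`, `c` is a sum of step functions at `n - d`, `n - e`, `n - 1` (`r` times) and `n`,
where `6m + 2 = d(d+1) + e(e+1) + 2r` is obtained greedily and `d + e + 2r + 1 ≤ m`.
-/

open Finset

def balanceSum (n : ℕ) (a : ℕ → ℤ) : ℤ := ∑ i ∈ Icc 1 n, (i : ℤ) * a i

def totalWeight (n : ℕ) (a : ℕ → ℤ) : ℤ := ∑ i ∈ Icc 1 n, (i : ℤ) * |a i|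

def ramp (p i : ℕ) : ℤ := p - i

def heaviside (s i : ℕ) : ℤ := if s ≤ i then 1 else 0

section Weighing

variable {n : ℕ}

theorem balanceSum_add (a b : ℕ → ℤ) :
    balanceSum n (a + b) = balanceSum n a + balanceSum n b := by
  simp only [balanceSum, Pi.add_apply, mul_add, sum_add_distrib]

theorem balanceSum_sub (a b : ℕ → ℤ) :
    balanceSum n (a - b) = balanceSum n a - balanceSum n b := by
  simp only [balanceSum, Pi.sub_apply, mul_sub, sum_sub_distrib]

theorem balanceSum_smul (c : ℤ) (a : ℕ → ℤ) : balanceSum n (c • a) = c * balanceSum n a := by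
  simp only [balanceSum, Pi.smul_apply, smul_eq_mul, mul_sum, mul_left_comm]

theorem abs_balanceSum_le_totalWeight (a : ℕ → ℤ) : |balanceSum n a| ≤ totalWeight n a :=
  (abs_sum_le_sum_abs _ _).trans_eq <| sum_congr rfl fun i _ => by rw [abs_mul, Nat.abs_cast]

theorem totalWeight_add_of_sameSign {a b : ℕ → ℤ}
    (h : ∀ i ∈ Icc 1 n, 0 ≤ a i ∧ 0 ≤ b i ∨ a i ≤ 0 ∧ b i ≤ 0) :
    totalWeight n (a + b) = totalWeight n a + totalWeight n b := by
  simp only [totalWeight, ← sum_add_distrib, ← mul_add]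
  exact sum_congr rfl fun i hi => by rw [Pi.add_apply, (abs_add_eq_add_abs_iff _ _).2 (h i hi)]

theorem totalWeight_neg_of_nonneg {c : ℕ → ℤ} (hc : ∀ i, 0 ≤ c i) :
    totalWeight n (-c) = balanceSum n c :=
  sum_congr rfl fun i _ => by rw [Pi.neg_apply, abs_neg, abs_of_nonneg (hc i)]

end Weighing

theorem six_mul_balanceSum_ramp (n p : ℕ) :
    6 * balanceSum n (ramp p) = 3 * p * n * (n + 1) - n * (n + 1) * (2 * n + 1) := by
  induction n with
  | zero => simp [balanceSum]
  | succ n ih =>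
    rw [balanceSum, sum_Icc_succ_top (by omega), mul_add, ← balanceSum, ih, ramp]
    push_cast
    ring

theorem three_mul_totalWeight_ramp_add_balanceSum {n p : ℕ} (hp : p ≤ n) :
    3 * (totalWeight n (ramp p) + balanceSum n (ramp p)) = p ^ 3 - p := by
  have h : totalWeight n (ramp p) + balanceSum n (ramp p) = 2 * balanceSum p (ramp p) := by
    rw [totalWeight, balanceSum, balanceSum, ← sum_add_distrib, mul_sum,
      ← sum_subset (Icc_subset_Icc_right hp)]
    · refine sum_congr rfl fun i hi => ?_
      have : (i : ℤ) ≤ p := by exact_mod_cast (mem_Icc.1 hi).2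
      rw [ramp, abs_of_nonneg (by linarith)]
      ring
    · intro i hin hip
      have : (p : ℤ) < i := by
        simp only [mem_Icc, not_and, not_le] at hin hip
        exact_mod_cast hip hin.1
      rw [ramp, abs_of_neg (by linarith)]
      ring
  linear_combination 3 * h + six_mul_balanceSum_ramp p p

theorem monotone_heaviside (s : ℕ) : Monotone (heaviside s) := fun i j hij => by
  unfold heaviside
  split_ifs <;> omega

theorem heaviside_eq_zero {s i : ℕ} (h : i < s) : heaviside s i = 0 := if_neg (by omega)

theorem two_mul_balanceSum_heaviside {n s : ℕ} (hs : 1 ≤ s) (hsn : s ≤ n + 1) :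
    2 * balanceSum n (heaviside s) = (n + s) * (n + 1 - s) := by
  obtain ⟨k, rfl⟩ : ∃ k, n = s - 1 + k := ⟨n - (s - 1), by omega⟩
  clear hsn
  induction k with
  | zero =>
    rw [balanceSum, sum_eq_zero fun i hi => by
      rw [heaviside, if_neg (by simp at hi; omega), mul_zero]]
    push_cast [hs]
    ring
  | succ k ih =>
    rw [← add_assoc, balanceSum, sum_Icc_succ_top (by omega), mul_add, ← balanceSum, ih, heaviside,
      if_pos (by omega)]
    push_cast [hs]
    ring

namespace Downhill

variable {n : ℕ} {a : ℕ → ℤ}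

theorem exists_sign_change (ha : Downhill n a) :
    ∃ p ≤ n, (∀ i, 1 ≤ i → i ≤ p → 0 ≤ a i) ∧ ∀ i, p < i → i ≤ n → a i < 0 := by
  classical
  let Nonneg p := ∀ i, 1 ≤ i → i ≤ p → 0 ≤ a i
  refine ⟨Nat.findGreatest Nonneg n, Nat.findGreatest_le n,
    Nat.findGreatest_spec (P := Nonneg) (m := 0) (Nat.zero_le n) (fun i _ _ => by omega),
    fun i hpi hin => ?_⟩
  obtain ⟨j, hj, hji, haj⟩ : ∃ j, 1 ≤ j ∧ j ≤ i ∧ a j < 0 := by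
    simpa [Nonneg] using Nat.findGreatest_is_greatest hpi hin
  linarith [ha.add_sub_le hj hji hin, (Nat.cast_le (α := ℤ)).2 hji]

theorem exists_ramp_totalWeight_le (ha : Downhill n a) :
    ∃ p ≤ n, totalWeight n (ramp p) + |balanceSum n a - balanceSum n (ramp p)| ≤
      totalWeight n a := by
  obtain ⟨p, hpn, hpos, hneg⟩ := ha.exists_sign_change
  have hsign : ∀ i ∈ Icc 1 n, 0 ≤ ramp p i ∧ 0 ≤ (a - ramp p) i ∨
      ramp p i ≤ 0 ∧ (a - ramp p) i ≤ 0 := by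
    intro i hi
    obtain ⟨hi1, hin⟩ := mem_Icc.1 hi
    simp only [ramp, Pi.sub_apply]
    rcases le_or_gt i p with hip | hpi
    · have := ha.add_sub_le hi1 hip hpn
      have := hpos p (hi1.trans hip) le_rfl
      left; constructor <;> linarith
    · have := ha.add_sub_le (Nat.le_add_left 1 p) hpi hin
      have := hneg (p + 1) (Nat.lt_succ_self p) (hpi.trans_le hin)
      have : (p : ℤ) < i := by exact_mod_cast hpi
      push_cast at *
      right; constructor <;> linarith
  refine ⟨p, hpn, ?_⟩
  calc totalWeight n (ramp p) + |balanceSum n a - balanceSum n (ramp p)|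
      ≤ totalWeight n (ramp p) + totalWeight n (a - ramp p) := by
        rw [← balanceSum_sub]; grw [abs_balanceSum_le_totalWeight]
    _ = totalWeight n a := by rw [← totalWeight_add_of_sameSign hsign, add_sub_cancel]

end Downhill

theorem cube_sub_le_three_mul_totalWeight {k n : ℕ} (hn : n = 3 * k + 2) {a : ℕ → ℤ}
    (ha : Downhill n a) (hS : balanceSum n a = 0 ∨ balanceSum n a = -1) :
    (2 * k + 2 : ℤ) ^ 3 - (2 * k + 2) ≤ 3 * totalWeight n a := by
  obtain ⟨p, hpn, hW⟩ := ha.exists_ramp_totalWeight_le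
  have hAB := three_mul_totalWeight_ramp_add_balanceSum hpn
  have hB := six_mul_balanceSum_ramp n p
  have hS' : -1 ≤ balanceSum n a ∧ balanceSum n a ≤ 0 := by omega
  have hpn' : (p : ℤ) ≤ 3 * k + 2 := by exact_mod_cast hn ▸ hpn
  subst hn
  push_cast at hB
  rcases le_or_gt (2 * k + 2) p with hp | hp
  · have hp' : (2 * k + 2 : ℤ) ≤ p := by exact_mod_cast hp
    have := neg_abs_le (balanceSum (3 * k + 2) a - balanceSum (3 * k + 2) (ramp p))
    have : (2 * k + 2 : ℤ) ^ 3 - (2 * k + 2) ≤ p ^ 3 - p := by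
      have : (0 : ℤ) ≤ p ^ 2 + p * (2 * k + 2) + (2 * k + 1) * (2 * k + 3) := by positivity
      nlinarith [mul_nonneg (sub_nonneg.2 hp') this]
    linarith
  · have hp' : (p : ℤ) ≤ 2 * k + 1 := by omega
    have := le_abs_self (balanceSum (3 * k + 2) a - balanceSum (3 * k + 2) (ramp p))
    -- `p ↦ p³ - p - 6 S ℓ_p` is decreasing on `[0, n]`
    nlinarith [mul_nonneg (sub_nonneg.2 hp') (sub_nonneg.2 hp'),
      mul_nonneg (Int.natCast_nonneg p) (sub_nonneg.2 hp')]

def pronicRoot (N : ℕ) : ℕ := Nat.findGreatest (fun d => d * (d + 1) ≤ N) N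

def pronicRem (N : ℕ) : ℕ := N - pronicRoot N * (pronicRoot N + 1)

theorem pronicRoot_mul_succ_le (N : ℕ) : pronicRoot N * (pronicRoot N + 1) ≤ N :=
  Nat.findGreatest_spec (P := fun d => d * (d + 1) ≤ N) (Nat.zero_le N) (by simp)

theorem lt_succ_pronicRoot_mul (N : ℕ) : N < (pronicRoot N + 1) * (pronicRoot N + 2) := by
  by_contra! h
  have : pronicRoot N + 1 ≤ N := by nlinarith
  exact Nat.findGreatest_is_greatest (P := fun d => d * (d + 1) ≤ N) (Nat.lt_succ_self _) this h

theorem pronicRoot_mul_succ_add_pronicRem (N : ℕ) :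
    pronicRoot N * (pronicRoot N + 1) + pronicRem N = N :=
  Nat.add_sub_of_le (pronicRoot_mul_succ_le N)

theorem even_pronicRem {N : ℕ} (hN : Even N) : Even (pronicRem N) := by
  rw [← pronicRoot_mul_succ_add_pronicRem N, Nat.even_add] at hN
  exact hN.1 (Nat.even_mul_succ_self _)

theorem pronicRem_le_two_mul_pronicRoot {N : ℕ} (hN : Even N) :
    pronicRem N ≤ 2 * pronicRoot N := by
  have : pronicRem N < 2 * pronicRoot N + 2 := by
    nlinarith [lt_succ_pronicRoot_mul N, pronicRoot_mul_succ_add_pronicRem N]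
  obtain ⟨r, hr⟩ := even_pronicRem hN
  omega

theorem exists_pronic_add_pronic_add_two_mul {m : ℕ} (hm : 9 ≤ m) :
    ∃ d e r : ℕ, d * (d + 1) + e * (e + 1) + 2 * r = 6 * m + 2 ∧ d + e + 2 * r + 1 ≤ m := by
  have hN : Even (6 * m + 2) := ⟨3 * m + 1, by ring⟩
  have hR := even_pronicRem hN
  obtain ⟨r, hr⟩ := even_pronicRem hR
  refine ⟨pronicRoot (6 * m + 2), pronicRoot (pronicRem (6 * m + 2)), r, ?_, ?_⟩
  · rw [two_mul, ← hr, add_assoc, pronicRoot_mul_succ_add_pronicRem,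
      pronicRoot_mul_succ_add_pronicRem]
  rw [two_mul, ← hr]
  rcases lt_or_ge m 47 with hsmall | hlarge
  · have : ∀ m < 47, 9 ≤ m → pronicRoot (6 * m + 2) + pronicRoot (pronicRem (6 * m + 2)) +
        pronicRem (pronicRem (6 * m + 2)) + 1 ≤ m := by decide +kernel
    exact this m hsmall hm
  · -- for large `m` the bounds `2r ≤ 2e`, `e(e+1) ≤ 2d` and `d(d+1) ≤ 6m+2` suffice
    have h1 := pronicRoot_mul_succ_le (6 * m + 2)
    have h2 := (pronicRoot_mul_succ_le (pronicRem (6 * m + 2))).trans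
      (pronicRem_le_two_mul_pronicRoot hN)
    have h3 := pronicRem_le_two_mul_pronicRoot hR
    nlinarith [sq_nonneg ((pronicRoot (pronicRem (6 * m + 2)) : ℤ) - 2)]

theorem downhill_ramp_sub {n q : ℕ} {c : ℕ → ℤ} (hc : Monotone c) : Downhill n (ramp q - c) :=
  fun i j _ hij _ => by
    have := hc hij.le
    have : (i : ℤ) < j := by exact_mod_cast hij
    simp only [Pi.sub_apply, ramp]
    linarith

theorem totalWeight_ramp_sub {n q : ℕ} {c : ℕ → ℤ} (hc : ∀ i, 0 ≤ c i)
    (hcq : ∀ i < q, c i = 0) :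
    totalWeight n (ramp q - c) = totalWeight n (ramp q) + balanceSum n c := by
  rw [sub_eq_add_neg, totalWeight_add_of_sameSign, totalWeight_neg_of_nonneg hc]
  intro i _
  rcases lt_or_ge i q with hi | hi
  · left
    simp only [ramp, Pi.neg_apply, hcq i hi, neg_zero, le_refl, and_true]
    omega
  · right
    simp only [ramp, Pi.neg_apply, neg_nonpos, hc i, and_true]
    omega

theorem exists_balance_three_mul_totalWeight_eq {k n : ℕ} (heven : Even k) (hn : n = 3 * k + 2)
    (hn50 : 50 < n) :
    ∃ a, Downhill n a ∧ balanceSum n a = 0 ∧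
      3 * totalWeight n a = (2 * k + 2 : ℤ) ^ 3 - (2 * k + 2) := by
  obtain ⟨m, rfl⟩ := heven
  obtain ⟨d, e, r, hde, hcost⟩ := exists_pronic_add_pronic_add_two_mul (m := m) (by omega)
  obtain ⟨P, hP⟩ : ∃ P, d + e + 2 * r + 1 + P = m := ⟨_, Nat.add_sub_of_le hcost⟩
  have hd : d ≤ 2 * m := by nlinarith
  have he : e ≤ 2 * m := by nlinarith
  let c : ℕ → ℤ := heaviside (n - d) + heaviside (n - e) + (r : ℤ) • heaviside (n - 1) +
    (P : ℤ) • heaviside n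
  have hmono : Monotone c :=
    (((monotone_heaviside _).add (monotone_heaviside _)).add
      ((monotone_heaviside _).const_smul (Int.natCast_nonneg r))).add
      ((monotone_heaviside _).const_smul (Int.natCast_nonneg P))
  have hzero : ∀ i < 2 * (m + m) + 2, c i = 0 := fun i hi => by
    simp only [c, Pi.add_apply, Pi.smul_apply, smul_eq_mul]
    rw [heaviside_eq_zero (by omega), heaviside_eq_zero (by omega), heaviside_eq_zero (by omega),
      heaviside_eq_zero (by omega)]
    ring
  have hnonneg : ∀ i, 0 ≤ c i := fun i =>
    (hzero 0 (by omega)).symm.le.trans (hmono (Nat.zero_le i))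
  have hsum : balanceSum n c = balanceSum n (ramp (2 * (m + m) + 2)) := by
    have h1 := two_mul_balanceSum_heaviside (n := n) (s := n - d) (by omega) (by omega)
    have h2 := two_mul_balanceSum_heaviside (n := n) (s := n - e) (by omega) (by omega)
    have h3 := two_mul_balanceSum_heaviside (n := n) (s := n - 1) (by omega) (by omega)
    have h4 := two_mul_balanceSum_heaviside (n := n) (s := n) (by omega) (by omega)
    have hB := six_mul_balanceSum_ramp n (2 * (m + m) + 2)
    suffices 6 * balanceSum n c = 6 * balanceSum n (ramp (2 * (m + m) + 2)) by linarith
    simp only [c, balanceSum_add, balanceSum_smul]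
    push_cast [Nat.cast_sub (show d ≤ n by omega), Nat.cast_sub (show e ≤ n by omega),
      Nat.cast_sub (show 1 ≤ n by omega)] at h1 h2 h3 h4 hB
    have hde' : (d * (d + 1) + e * (e + 1) + 2 * r : ℤ) = 6 * m + 2 := by exact_mod_cast hde
    have hP' : (d + e + 2 * r + 1 + P : ℤ) = m := by exact_mod_cast hP
    have hn' : (n : ℤ) = 6 * m + 2 := by omega
    rw [hn'] at h1 h2 h3 h4 hB
    linear_combination 3 * h1 + 3 * h2 + 3 * r * h3 + 3 * P * h4 - hB
      + 6 * (6 * m + 2) * hP' - 3 * hde'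
  refine ⟨ramp (2 * (m + m) + 2) - c, downhill_ramp_sub hmono,
    by rw [balanceSum_sub, hsum, sub_self], ?_⟩
  rw [totalWeight_ramp_sub hnonneg hzero, hsum,
    three_mul_totalWeight_ramp_add_balanceSum (by omega)]
  push_cast
  ring

/-- For `n = 3k+2` with `k` even and `n > 50`, the minimum total weight of a
downhill weighing that is a balance or a tight imbalance equals
`(8k³+24k²+22k+6)/3`, achieved by a balance. (Stated with both sides
multiplied by 3.) -/
theorem min_weight_three_k_plus_two_even (k n : ℕ) (heven : Even k)
    (hn : n = 3 * k + 2) (hn50 : 50 < n) :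
    (∀ a : ℕ → ℤ, (∀ i j : ℕ, 1 ≤ i → i < j → j ≤ n → a j < a i) →
      (∑ i ∈ Finset.Icc 1 n, (i : ℤ) * a i = 0 ∨
        ∑ i ∈ Finset.Icc 1 n, (i : ℤ) * a i = -1) →
      8 * (k : ℤ) ^ 3 + 24 * (k : ℤ) ^ 2 + 22 * (k : ℤ) + 6 ≤
        3 * ∑ i ∈ Finset.Icc 1 n, (i : ℤ) * |a i|) ∧
    (∃ a : ℕ → ℤ, (∀ i j : ℕ, 1 ≤ i → i < j → j ≤ n → a j < a i) ∧
      ∑ i ∈ Finset.Icc 1 n, (i : ℤ) * a i = 0 ∧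
      3 * ∑ i ∈ Finset.Icc 1 n, (i : ℤ) * |a i| =
        8 * (k : ℤ) ^ 3 + 24 * (k : ℤ) ^ 2 + 22 * (k : ℤ) + 6) := by
  have hq : (2 * k + 2 : ℤ) ^ 3 - (2 * k + 2) =
      8 * (k : ℤ) ^ 3 + 24 * (k : ℤ) ^ 2 + 22 * k + 6 := by
    ring
  obtain ⟨a, ha, hS, hW⟩ := exists_balance_three_mul_totalWeight_eq heven hn hn50
  exact ⟨fun a ha hS => hq ▸ cube_sub_le_three_mul_totalWeight hn ha hS, a, ha, hS, hq ▸ hW⟩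
end

section
/- Let n ≥ 3 and set s' = ⌊(2n+4)/3⌋ and F(s,n) = (s−2)(s−1)/2 + (n−s+2)(n−s+1)/2. Then every downhill weighing a : {1,…,n} → ℤ (a(1) > … > a(n)) with Σ_{i=1}^n i·a(i) ∈ {0, −1} uses at least F(s',n) coins: Σ_{i=1}^n |a(i)| ≥ F(s',n). Explicitly, Σ_{i=1}^n |a(i)| ≥ (5n²−3n)/18 when n ≡ 0 (mod 3), Σ_{i=1}^n |a(i)| ≥ (5n²−n−4)/18 when n ≡ 1 (mod 3), and Σ_{i=1}^n |a(i)| ≥ (5n²−5n+8)/18 when n ≡ 2 (mod 3). -/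
/-!
Let `p` be the number of positive `a i` and `b i = p + 1 - i` the staircase with the same sign
pattern. As `a` is downhill, `d = a - b` is non-increasing, so `d` has the sign of `b` throughout
and `∑ |a i| = ∑ |b i| + ∑ |d i| ≥ F(p + 2, n) + D`, where `D = ∑_{i ≤ p} d i`.
If `p + 2 ≥ s'`, then `F(p + 2, n) ≥ F(s', n)` because `F(·, n)` is convex with its minimum at
`(n + 3) / 2 ≤ s'`. Otherwise the balance condition makes `D` large: by Chebyshev's sum inequality
`-1 ≤ S(a) ≤ S(b) + ∑_{i ≤ p} i * d i ≤ S(b) + (p + 1) D / 2`, and what remains is a cubic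
inequality in `n`, `p`, `s'`.
-/

open Finset

def twiceF (s n : ℤ) : ℤ := (s - 2) * (s - 1) + (n - s + 2) * (n - s + 1)

lemma twiceF_sub_twiceF (s t n : ℤ) :
    twiceF s n - twiceF t n = 2 * (s - t) * (s + t - n - 3) := by
  unfold twiceF; ring

lemma nine_mul_twiceF {n z r : ℤ} (h : 3 * z = 2 * n + r) :
    9 * twiceF z n = (2 * n + r - 6) * (2 * n + r - 3) + (n - r + 6) * (n - r + 3) := by
  unfold twiceF; linear_combination (6 * z - 2 * n + 2 * r - 18) * h

lemma twiceF_le_twiceF {n z s : ℤ} (hzs : z ≤ s) (hz : n + 2 ≤ 2 * z) :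
    twiceF z n ≤ twiceF s n := by
  rcases hzs.eq_or_lt with rfl | hlt
  · rfl
  · nlinarith [twiceF_sub_twiceF s z n]

lemma three_mul_twiceF_sub_le {n p z : ℤ} (hp : 0 ≤ p) (hpz : p + 3 ≤ z)
    (hz : 3 * z ≤ 2 * n + 4) :
    3 * (p + 1) * (twiceF z n - twiceF (p + 2) n) + 12 ≤
      2 * (n * (n + 1) * (2 * n - 3 * p - 2)) := by
  obtain ⟨u, rfl⟩ := Int.eq_ofNat_of_zero_le hp
  obtain ⟨v, hv⟩ := Int.eq_ofNat_of_zero_le (sub_nonneg.2 hpz)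
  obtain ⟨w, hw⟩ := Int.eq_ofNat_of_zero_le (sub_nonneg.2 hz)
  -- eight times the gap between the two sides, expanded in `u = p`, `v = z - p - 3` and
  -- `w = 2n + 4 - 3z`
  have hpoly : (0 : ℤ) ≤ 174 + 154 * w + 30 * w ^ 2 + 2 * w ^ 3 + 450 * v + 192 * v * w
      + 18 * v * w ^ 2 + 282 * v ^ 2 + 54 * v ^ 2 * w + 54 * v ^ 3 + 216 * u + 120 * u * w
      + 12 * u * w ^ 2 + 336 * u * v + 84 * u * v * w + 120 * u * v ^ 2 + 42 * u ^ 2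
      + 18 * u ^ 2 * w + 42 * u ^ 2 * v := by positivity
  rw [← hv, ← hw] at hpoly
  rw [twiceF_sub_twiceF]
  linarith

lemma twiceF_le_twiceF_add {n p z D : ℤ} (hp : 0 ≤ p) (hz : n + 2 ≤ 2 * z)
    (hz' : 3 * z ≤ 2 * n + 4) (hD : 0 ≤ D)
    (hpD : n * (n + 1) * (2 * n - 3 * p - 2) ≤ 3 * (p + 1) * D + 6) :
    twiceF z n ≤ twiceF (p + 2) n + 2 * D := by
  rcases le_or_gt z (p + 2) with hzp | hpz
  · linarith [twiceF_le_twiceF hzp hz]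
  · have hcubic := three_mul_twiceF_sub_le hp (by omega) hz'
    refine le_of_mul_le_mul_left (a := 3 * (p + 1)) ?_ (by positivity)
    linarith

def staircase (p i : ℕ) : ℤ := p + 1 - i

lemma two_mul_sum_Icc_cast_id (p : ℕ) : 2 * ∑ i ∈ Icc 1 p, (i : ℤ) = p * (p + 1) := by
  induction p with
  | zero => simp
  | succ p ih =>
    rw [sum_Icc_succ_top (by omega), mul_add, ih]
    push_cast
    ring

lemma six_mul_sum_mul_staircase (p n : ℕ) :
    6 * ∑ i ∈ Icc 1 n, (i : ℤ) * staircase p i = n * (n + 1) * (3 * p + 2 - 2 * n) := by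
  induction n with
  | zero => simp
  | succ n ih =>
    rw [sum_Icc_succ_top (by omega), mul_add, ih]
    simp only [staircase]
    push_cast
    ring

lemma two_mul_sum_abs_staircase {p n : ℕ} (hpn : p ≤ n) :
    2 * ∑ i ∈ Icc 1 n, |staircase p i| = twiceF (p + 2) n := by
  induction n, hpn using Nat.le_induction with
  | base =>
    have hsum : ∑ i ∈ Icc 1 p, |staircase p i| = ∑ i ∈ Icc 1 p, ((p : ℤ) + 1 - i) :=
      sum_congr rfl fun i hi => abs_of_nonneg (by simp only [staircase]; grind)
    rw [hsum, sum_sub_distrib, mul_sub, two_mul_sum_Icc_cast_id, sum_const, Nat.card_Icc]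
    simp only [twiceF, nsmul_eq_mul]
    push_cast
    ring
  | succ n hpn ih =>
    rw [sum_Icc_succ_top (by omega), mul_add, ih,
      abs_of_nonpos (by simp only [staircase]; push_cast; omega)]
    simp only [twiceF, staircase]
    push_cast
    ring

lemma two_mul_sum_Icc_mul_le_of_antitoneOn {p : ℕ} {f : ℕ → ℤ}
    (hf : AntitoneOn f (Set.Icc 1 p)) :
    2 * ∑ i ∈ Icc 1 p, (i : ℤ) * f i ≤ (p + 1) * ∑ i ∈ Icc 1 p, f i := by
  rcases Nat.eq_zero_or_pos p with rfl | hp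
  · simp
  have hcheb := AntivaryOn.card_mul_sum_le_sum_mul_sum (s := Icc 1 p) (f := f)
    (g := fun i => (i : ℤ)) fun i hi j hj hij =>
      hf (by simpa using hi) (by simpa using hj) (Int.ofNat_le.1 hij.le)
  rw [Nat.card_Icc, add_tsub_cancel_right] at hcheb
  simp only [mul_comm (f _)] at hcheb
  refine le_of_mul_le_mul_left ?_ (by exact_mod_cast hp : (0 : ℤ) < p)
  linear_combination 2 * hcheb + (∑ i ∈ Icc 1 p, f i) * two_mul_sum_Icc_cast_id p

section Downhill

variable {n p : ℕ} {a : ℕ → ℤ}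

lemma antitoneOn_add_of_strictAntiOn (ha : StrictAntiOn a (Set.Icc 1 n)) :
    AntitoneOn (fun i => a i + i) (Set.Icc 1 n) := by
  intro i hi j hj hij
  induction j, hij using Nat.le_induction with
  | base => rfl
  | succ j hij ih =>
    have hj' : j ∈ Set.Icc 1 n := ⟨hi.1.trans hij, by have := hj.2; omega⟩
    have hstep := ha hj' hj (Nat.lt_succ_self j)
    have := ih hj'
    push_cast at this ⊢
    omega

lemma exists_sign_change (ha : AntitoneOn a (Set.Icc 1 n)) :
    ∃ p ≤ n, (∀ i ∈ Icc 1 p, 0 < a i) ∧ ∀ i ∈ Icc (p + 1) n, a i ≤ 0 := by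
  obtain ⟨hpn, hpos, hmax⟩ :=
    Nat.findGreatest_eq_iff.1 (rfl : Nat.findGreatest (0 < a ·) n = _)
  refine ⟨_, hpn, fun i hi => ?_, fun i hi => not_lt.1 (hmax (by grind) (mem_Icc.1 hi).2)⟩
  rw [mem_Icc] at hi
  exact (hpos (by omega)).trans_le (ha ⟨hi.1, by omega⟩ ⟨by omega, hpn⟩ hi.2)

lemma staircase_le (ha : StrictAntiOn a (Set.Icc 1 n)) (hpn : p ≤ n)
    (hpos : ∀ i ∈ Icc 1 p, 0 < a i) {i : ℕ} (hi : i ∈ Icc 1 p) : staircase p i ≤ a i := by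
  rw [mem_Icc] at hi
  have hmono := antitoneOn_add_of_strictAntiOn ha ⟨hi.1, by omega⟩ ⟨by omega, hpn⟩ hi.2
  have := hpos p (by simp only [mem_Icc]; omega)
  simp only [staircase] at hmono ⊢
  omega

lemma le_staircase (ha : StrictAntiOn a (Set.Icc 1 n))
    (hneg : ∀ i ∈ Icc (p + 1) n, a i ≤ 0) {i : ℕ} (hi : i ∈ Icc (p + 1) n) :
    a i ≤ staircase p i := by
  rw [mem_Icc] at hi
  have hmono := antitoneOn_add_of_strictAntiOn ha ⟨by omega, le_trans (by omega) hi.2⟩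
    ⟨by omega, hi.2⟩ hi.1
  have := hneg (p + 1) (by simp only [mem_Icc]; omega)
  simp only [staircase] at hmono ⊢
  push_cast at hmono
  omega

lemma twiceF_add_le_two_mul_sum_abs (ha : StrictAntiOn a (Set.Icc 1 n)) (hpn : p ≤ n)
    (hpos : ∀ i ∈ Icc 1 p, 0 < a i) (hneg : ∀ i ∈ Icc (p + 1) n, a i ≤ 0) :
    twiceF (p + 2) n + 2 * ∑ i ∈ Icc 1 p, (a i - staircase p i) ≤
      2 * ∑ i ∈ Icc 1 n, |a i| := by
  have hsplit : ∀ i ∈ Icc 1 n, |a i| = |staircase p i| + |a i - staircase p i| := by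
    intro i hi
    refine (congrArg abs (add_sub_cancel _ _).symm).trans ((abs_add_eq_add_abs_iff _ _).2 ?_)
    rw [mem_Icc] at hi
    by_cases hip : i ≤ p
    · exact Or.inl ⟨by simp only [staircase]; omega,
        sub_nonneg.2 (staircase_le ha hpn hpos (mem_Icc.2 ⟨hi.1, hip⟩))⟩
    · exact Or.inr ⟨by simp only [staircase]; omega,
        sub_nonpos.2 (le_staircase ha hneg (mem_Icc.2 ⟨by omega, hi.2⟩))⟩
  have hdefect :
      ∑ i ∈ Icc 1 p, (a i - staircase p i) ≤ ∑ i ∈ Icc 1 n, |a i - staircase p i| :=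
    (sum_le_sum fun i _ => le_abs_self _).trans
      (sum_le_sum_of_subset_of_nonneg (Icc_subset_Icc_right hpn) fun i _ _ => abs_nonneg _)
  rw [sum_congr rfl hsplit, sum_add_distrib, mul_add, two_mul_sum_abs_staircase hpn]
  linarith

lemma le_three_mul_sum_sub_staircase_add_six (ha : StrictAntiOn a (Set.Icc 1 n)) (hpn : p ≤ n)
    (hneg : ∀ i ∈ Icc (p + 1) n, a i ≤ 0) (hS : -1 ≤ ∑ i ∈ Icc 1 n, (i : ℤ) * a i) :
    (n : ℤ) * (n + 1) * (2 * n - 3 * p - 2) ≤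
      3 * (p + 1) * ∑ i ∈ Icc 1 p, (a i - staircase p i) + 6 := by
  have hsplit : ∑ i ∈ Icc 1 n, (i : ℤ) * a i = ∑ i ∈ Icc 1 n, (i : ℤ) * staircase p i +
      ∑ i ∈ Icc 1 n, (i : ℤ) * (a i - staircase p i) := by
    rw [← sum_add_distrib]
    exact sum_congr rfl fun i _ => by ring
  have htail : ∑ i ∈ Icc 1 n, (i : ℤ) * (a i - staircase p i) ≤
      ∑ i ∈ Icc 1 p, (i : ℤ) * (a i - staircase p i) :=
    sum_le_sum_of_subset_of_nonpos' (Icc_subset_Icc_right hpn) fun i hi hip =>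
      mul_nonpos_of_nonneg_of_nonpos (Nat.cast_nonneg i)
        (sub_nonpos.2 (le_staircase ha hneg (by grind)))
  have hanti : AntitoneOn (fun i => a i - staircase p i) (Set.Icc 1 p) := by
    intro i hi j hj hij
    have := (antitoneOn_add_of_strictAntiOn ha).mono (Set.Icc_subset_Icc_right hpn) hi hj hij
    simp only [staircase] at this ⊢
    linarith
  have hcheb := two_mul_sum_Icc_mul_le_of_antitoneOn hanti
  have hb := six_mul_sum_mul_staircase p n
  linarith

theorem twiceF_le_two_mul_sum_abs (ha : StrictAntiOn a (Set.Icc 1 n))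
    (hS : -1 ≤ ∑ i ∈ Icc 1 n, (i : ℤ) * a i) {z : ℤ} (hz : n + 2 ≤ 2 * z)
    (hz' : 3 * z ≤ 2 * n + 4) : twiceF z n ≤ 2 * ∑ i ∈ Icc 1 n, |a i| := by
  obtain ⟨p, hpn, hpos, hneg⟩ := exists_sign_change ha.antitoneOn
  have hD : 0 ≤ ∑ i ∈ Icc 1 p, (a i - staircase p i) :=
    sum_nonneg fun i hi => sub_nonneg.2 (staircase_le ha hpn hpos hi)
  calc twiceF z n ≤ twiceF (p + 2) n + 2 * ∑ i ∈ Icc 1 p, (a i - staircase p i) :=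
        twiceF_le_twiceF_add (by positivity) hz hz' hD
          (le_three_mul_sum_sub_staircase_add_six ha hpn hneg hS)
    _ ≤ 2 * ∑ i ∈ Icc 1 n, |a i| := twiceF_add_le_two_mul_sum_abs ha hpn hpos hneg

end Downhill

theorem coin_lower_bound_at_s'_general (n : ℕ) (a : ℕ → ℤ)
    (hdown : ∀ i j : ℕ, 1 ≤ i → i < j → j ≤ n → a j < a i)
    (hS : ∑ i ∈ Finset.Icc 1 n, (i : ℤ) * a i = 0 ∨
      ∑ i ∈ Finset.Icc 1 n, (i : ℤ) * a i = -1) :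
    ((((2 * n + 4) / 3 : ℕ) : ℤ) - 2) * ((((2 * n + 4) / 3 : ℕ) : ℤ) - 1) +
        ((n : ℤ) - (((2 * n + 4) / 3 : ℕ) : ℤ) + 2) *
          ((n : ℤ) - (((2 * n + 4) / 3 : ℕ) : ℤ) + 1) ≤
      2 * ∑ i ∈ Finset.Icc 1 n, |a i| ∧
    (n % 3 = 0 →
      5 * (n : ℤ) ^ 2 - 3 * (n : ℤ) ≤ 18 * ∑ i ∈ Finset.Icc 1 n, |a i|) ∧
    (n % 3 = 1 →
      5 * (n : ℤ) ^ 2 - (n : ℤ) - 4 ≤ 18 * ∑ i ∈ Finset.Icc 1 n, |a i|) ∧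
    (n % 3 = 2 →
      5 * (n : ℤ) ^ 2 - 5 * (n : ℤ) + 8 ≤ 18 * ∑ i ∈ Finset.Icc 1 n, |a i|) := by
  set z : ℕ := (2 * n + 4) / 3 with hz
  have hF : twiceF z n ≤ 2 * ∑ i ∈ Icc 1 n, |a i| :=
    twiceF_le_two_mul_sum_abs (fun i hi j hj hij => hdown i j hi.1 hij hj.2)
      (by rcases hS with h | h <;> omega) (by omega) (by omega)
  refine ⟨hF, fun h => ?_, fun h => ?_, fun h => ?_⟩
  · linarith [nine_mul_twiceF (r := 3) (show 3 * (z : ℤ) = 2 * n + 3 by omega)]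
  · linarith [nine_mul_twiceF (r := 4) (show 3 * (z : ℤ) = 2 * n + 4 by omega)]
  · linarith [nine_mul_twiceF (r := 2) (show 3 * (z : ℤ) = 2 * n + 2 by omega)]

/-- Every downhill weighing that is a balance or a tight imbalance uses at
least `F(s',n)` coins, where `s' = ⌊(2n+4)/3⌋`, with the explicit values
`(5n²−3n)/18`, `(5n²−n−4)/18`, `(5n²−5n+8)/18` according to `n mod 3`.
(Inequalities stated with both sides multiplied by 2, resp. 18.) -/
theorem coin_lower_bound_at_s' (n : ℕ) (hn : 3 ≤ n) (a : ℕ → ℤ)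
    (hdown : ∀ i j : ℕ, 1 ≤ i → i < j → j ≤ n → a j < a i)
    (hS : ∑ i ∈ Finset.Icc 1 n, (i : ℤ) * a i = 0 ∨
      ∑ i ∈ Finset.Icc 1 n, (i : ℤ) * a i = -1) :
    ((((2 * n + 4) / 3 : ℕ) : ℤ) - 2) * ((((2 * n + 4) / 3 : ℕ) : ℤ) - 1) +
        ((n : ℤ) - (((2 * n + 4) / 3 : ℕ) : ℤ) + 2) *
          ((n : ℤ) - (((2 * n + 4) / 3 : ℕ) : ℤ) + 1) ≤
      2 * ∑ i ∈ Finset.Icc 1 n, |a i| ∧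
    (n % 3 = 0 →
      5 * (n : ℤ) ^ 2 - 3 * (n : ℤ) ≤ 18 * ∑ i ∈ Finset.Icc 1 n, |a i|) ∧
    (n % 3 = 1 →
      5 * (n : ℤ) ^ 2 - (n : ℤ) - 4 ≤ 18 * ∑ i ∈ Finset.Icc 1 n, |a i|) ∧
    (n % 3 = 2 →
      5 * (n : ℤ) ^ 2 - 5 * (n : ℤ) + 8 ≤ 18 * ∑ i ∈ Finset.Icc 1 n, |a i|) :=
  coin_lower_bound_at_s'_general n a hdown hS
end

section
/- Let n ≥ 2 and let a : {1,…,n} → ℤ be a verifying imbalance with the left pan lighter that is not tight, i.e., Σ_{i=1}^n i·a(i) ≤ −2 and Σ_{i=1}^n i·a(σ(i)) ≥ 0 for every permutation σ ≠ id. Then there exists a downhill weighing b : {1,…,n} → ℤ (b(1) > … > b(n)) with Σ_{i=1}^n i·b(i) ∈ {0, −1} that uses strictly fewer coins: Σ_{i=1}^n |b(i)| < Σ_{i=1}^n |a(i)|. In other words, the smallest number of coins cannot be achieved by a downhill imbalance that is not tight. -/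
private lemma sum_two_point {n : ℕ} (p q : Fin n) (hpq : p ≠ q) (x y : ℤ) :
    ∑ i : Fin n, ((if i = p then x else 0) + (if i = q then y else 0)) = x + y := by
  rw [Finset.sum_add_distrib]
  simp

private lemma sum_pt {n : ℕ} (a : Fin n → ℤ) (p q : Fin n) (hpq : p ≠ q) (x y : ℤ) :
    ∑ i : Fin n, ((i:ℤ)+1) * (a i + ((if i = p then x else 0) + (if i = q then y else 0)))
      = (∑ i : Fin n, ((i:ℤ)+1) * a i) + (((p:ℤ)+1)*x + ((q:ℤ)+1)*y) := by
  have h : ∀ i : Fin n, ((i:ℤ)+1) * (a i + ((if i = p then x else 0) + (if i = q then y else 0)))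
      = ((i:ℤ)+1)*a i + ((if i = p then ((p:ℤ)+1)*x else 0) + (if i = q then ((q:ℤ)+1)*y else 0)) := by
    intro i
    by_cases h1 : i = p
    · subst h1
      rw [if_pos rfl, if_pos rfl, if_neg hpq, if_neg hpq]
      ring
    · rw [if_neg h1, if_neg h1]
      by_cases h2 : i = q
      · subst h2
        rw [if_pos rfl, if_pos rfl]
        ring
      · rw [if_neg h2, if_neg h2]
        ring
  simp_rw [h]
  rw [Finset.sum_add_distrib, Finset.sum_add_distrib]
  simp

private lemma swap_sum {n : ℕ} (a : Fin n → ℤ) (i j : Fin n) (hij : i ≠ j) :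
    ∑ k : Fin n, ((k:ℤ)+1) * a (Equiv.swap i j k)
      = (∑ k : Fin n, ((k:ℤ)+1) * a k) + ((j:ℤ) - (i:ℤ)) * (a i - a j) := by
  have key : ∑ k : Fin n, (((k:ℤ)+1) * a (Equiv.swap i j k) - ((k:ℤ)+1) * a k)
      = ((j:ℤ) - (i:ℤ)) * (a i - a j) := by
    rw [← Finset.sum_subset (Finset.subset_univ ({i, j} : Finset (Fin n)))]
    · rw [Finset.sum_pair hij, Equiv.swap_apply_left, Equiv.swap_apply_right]
      ring
    · intro x _ hx
      simp only [Finset.mem_insert, Finset.mem_singleton] at hx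
      push_neg at hx
      rw [Equiv.swap_apply_of_ne_of_ne hx.1 hx.2]
      ring
  rw [Finset.sum_sub_distrib] at key
  linarith

private lemma strictAnti_aux {n : ℕ} (f : Fin n → ℤ)
    (h : ∀ (m : ℕ) (hm : m + 1 < n), f ⟨m+1, hm⟩ < f ⟨m, Nat.lt_of_succ_lt hm⟩) :
    ∀ i j : Fin n, i < j → f j < f i := by
  have key : ∀ (jv : ℕ) (hj : jv < n) (iv : ℕ) (hi : iv < n), iv < jv →
      f ⟨jv, hj⟩ < f ⟨iv, hi⟩ := by
    intro jv
    induction jv with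
    | zero => omega
    | succ m ih =>
      intro hj iv hi hij
      rcases Nat.lt_or_ge iv m with h1 | h2
      · exact lt_trans (h m hj) (ih (Nat.lt_of_succ_lt hj) iv hi h1)
      · have : iv = m := by omega
        subst this
        exact h iv hj
  intro i j hij
  have := key j j.isLt i i.isLt hij
  simpa using this

private lemma mass_bound {n : ℕ} (hn : 2 ≤ n) (a : Fin n → ℤ)
    (hpos : ∀ i : Fin n, (i:ℕ) ≠ 0 → (i:ℕ) ≠ n-1 → 0 ≤ a i) :
    a ⟨0, by omega⟩ + (n:ℤ) * a ⟨n-1, by omega⟩ ≤ ∑ i : Fin n, ((i:ℤ)+1) * a i := by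
  set p : Fin n := ⟨n-1, by omega⟩ with hp
  set q : Fin n := ⟨0, by omega⟩ with hq
  have hqp : q ≠ p := by
    simp only [hp, hq, Ne, Fin.mk.injEq]
    omega
  have hvq : ((q:ℕ):ℤ) = 0 := by simp [hq]
  have hvp : ((p:ℕ):ℤ) = (n:ℤ) - 1 := by
    simp only [hp]
    omega
  have key : ∑ i : Fin n, ((if i = q then a q else 0) + (if i = p then (n:ℤ) * a p else 0))
      ≤ ∑ i : Fin n, ((i:ℤ)+1) * a i := by
    apply Finset.sum_le_sum
    intro i _
    by_cases h1 : i = q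
    · rw [h1, if_pos rfl, if_neg hqp, hvq]
      ring_nf
      exact le_refl _
    · rw [if_neg h1]
      by_cases h2 : i = p
      · rw [h2, if_pos rfl, hvp]
        ring_nf
        exact le_refl _
      · rw [if_neg h2]
        have hi0 : (i:ℕ) ≠ 0 := by
          intro h; exact h1 (by rw [hq]; exact Fin.ext h)
        have hin : (i:ℕ) ≠ n-1 := by
          intro h; exact h2 (by rw [hp]; exact Fin.ext h)
        have := hpos i hi0 hin
        positivity
  rw [sum_two_point q p hqp (a q) ((n:ℤ) * a p)] at key
  exact key

private lemma master {n : ℕ} (a : Fin n → ℤ) (σ : ℤ) (hσ : 2 ≤ σ)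
    (hS : ∑ i : Fin n, ((i:ℤ)+1) * a i = -σ)
    (gap : ∀ (m : ℕ) (hm : m + 1 < n), σ ≤ a ⟨m, Nat.lt_of_succ_lt hm⟩ - a ⟨m+1, hm⟩)
    (p q : Fin n) (hqp : q < p) (c d : ℤ)
    (hc0 : 0 ≤ c) (hcap : c ≤ -a p) (hc1 : c ≤ σ - 1)
    (hd : (0 ≤ d ∧ d ≤ -a q) ∨ (d ≤ 0 ∧ -d ≤ a q))
    (hd1 : d ≤ σ - 1) (hd2 : -d ≤ σ - 1)
    (hadj : (q:ℕ) + 1 = (p:ℕ) → c - d ≤ σ - 1)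
    (hcd : 1 ≤ c + |d|)
    (htar : ((p:ℤ)+1)*c + ((q:ℤ)+1)*d = σ ∨ ((p:ℤ)+1)*c + ((q:ℤ)+1)*d = σ - 1) :
    ∃ b : Fin n → ℤ, (∀ i j : Fin n, i < j → b j < b i) ∧
      (∑ i : Fin n, ((i:ℤ)+1) * b i = 0 ∨ ∑ i : Fin n, ((i:ℤ)+1) * b i = -1) ∧
      ∑ i : Fin n, |b i| < ∑ i : Fin n, |a i| := by
  have hpq : p ≠ q := hqp.ne'
  have hqpv : (q:ℕ) < (p:ℕ) := hqp
  refine ⟨fun i => a i + ((if i = p then c else 0) + (if i = q then d else 0)), ?_, ?_, ?_⟩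
  · -- strictly decreasing
    apply strictAnti_aux
    intro m hm
    have g := gap m hm
    set i0 : Fin n := ⟨m, Nat.lt_of_succ_lt hm⟩
    set i1 : Fin n := ⟨m+1, hm⟩
    show a i1 + ((if i1 = p then c else 0) + (if i1 = q then d else 0))
        < a i0 + ((if i0 = p then c else 0) + (if i0 = q then d else 0))
    have hv0 : (i0:ℕ) = m := rfl
    have hv1 : (i1:ℕ) = m + 1 := rfl
    by_cases h0p : i0 = p
    · -- i1 ≠ p, i1 ≠ q (since q < p = i0 < i1), i0 ≠ q
      have h1p : i1 ≠ p := by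
        intro h; rw [← h0p] at h; exact absurd (congrArg Fin.val h) (by simp [hv0, hv1])
      have h1q : i1 ≠ q := by
        intro h
        have : (q:ℕ) = m + 1 := by rw [← h]
        have : (p:ℕ) = m := by rw [← h0p]
        omega
      have h0q : i0 ≠ q := fun h => hpq (h0p ▸ h ▸ rfl)
      rw [if_pos h0p, if_neg h0q, if_neg h1p, if_neg h1q]
      linarith
    · by_cases h1p : i1 = p
      · by_cases h0q : i0 = q
        · have hadj' : c - d ≤ σ - 1 := by
            apply hadj
            rw [← h0q, ← h1p]
          have h1q : i1 ≠ q := by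
            intro h
            have : (q:ℕ) = m + 1 := by rw [← h]
            have : (q:ℕ) = m := by rw [← h0q]
            omega
          rw [if_neg h0p, if_pos h0q, if_pos h1p, if_neg h1q]
          linarith
        · have h1q : i1 ≠ q := by
            intro h
            have h1 : (q:ℕ) = m + 1 := by rw [← h]
            have h2 : (p:ℕ) = m + 1 := by rw [← h1p]
            omega
          rw [if_neg h0p, if_neg h0q, if_pos h1p, if_neg h1q]
          linarith
      · by_cases h0q : i0 = q
        · have h1q : i1 ≠ q := by
            intro h
            have h1 : (q:ℕ) = m + 1 := by rw [← h]
            have h2 : (q:ℕ) = m := by rw [← h0q]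
            omega
          rw [if_neg h0p, if_pos h0q, if_neg h1p, if_neg h1q]
          linarith
        · by_cases h1q : i1 = q
          · rw [if_neg h0p, if_neg h0q, if_neg h1p, if_pos h1q]
            linarith
          · rw [if_neg h0p, if_neg h0q, if_neg h1p, if_neg h1q]
            linarith
  · -- sum value
    rw [sum_pt a p q hpq c d, hS]
    rcases htar with h | h
    · left; linarith
    · right; linarith
  · -- coins
    have hap : a p ≤ -c := by linarith
    have hbp : |a p + c| ≤ |a p| - c := by
      rw [abs_of_nonpos (by linarith), abs_of_nonpos (by linarith)]
      linarith
    have hbq : |a q + d| ≤ |a q| - |d| := by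
      rcases hd with ⟨h1, h2⟩ | ⟨h1, h2⟩
      · rw [abs_of_nonneg h1, abs_of_nonpos (by linarith), abs_of_nonpos (by linarith)]
        linarith
      · rw [abs_of_nonpos h1, abs_of_nonneg (by linarith), abs_of_nonneg (by linarith)]
        linarith
    apply Finset.sum_lt_sum
    · intro i _
      show |a i + ((if i = p then c else 0) + (if i = q then d else 0))| ≤ |a i|
      by_cases h1 : i = p
      · subst h1
        rw [if_pos rfl, if_neg hpq]
        have : |d| ≥ 0 := abs_nonneg d
        calc |a i + (c + 0)| = |a i + c| := by ring_nf
          _ ≤ |a i| - c := hbp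
          _ ≤ |a i| := by linarith
      · rw [if_neg h1]
        by_cases h2 : i = q
        · subst h2
          rw [if_pos rfl]
          calc |a i + (0 + d)| = |a i + d| := by ring_nf
            _ ≤ |a i| - |d| := hbq
            _ ≤ |a i| := by linarith [abs_nonneg d]
        · rw [if_neg h2]
          simp
    · rcases lt_or_ge 0 c with hc | hc
      · refine ⟨p, Finset.mem_univ p, ?_⟩
        show |a p + ((if p = p then c else 0) + (if p = q then d else 0))| < |a p|
        rw [if_pos rfl, if_neg hpq]
        calc |a p + (c + 0)| = |a p + c| := by ring_nf
          _ ≤ |a p| - c := hbp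
          _ < |a p| := by linarith
      · have hc' : c = 0 := le_antisymm hc hc0
        have hdabs : 1 ≤ |d| := by rw [hc'] at hcd; linarith
        refine ⟨q, Finset.mem_univ q, ?_⟩
        show |a q + ((if q = p then c else 0) + (if q = q then d else 0))| < |a q|
        rw [if_neg (Ne.symm hpq), if_pos rfl]
        calc |a q + (0 + d)| = |a q + d| := by ring_nf
          _ ≤ |a q| - |d| := hbq
          _ < |a q| := by linarith


set_option maxHeartbeats 1000000 in
/-- The smallest number of coins cannot be achieved by a (verifying, hence
downhill) imbalance that is not tight: some downhill balance or tight
imbalance uses strictly fewer coins. -/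
theorem not_tight_not_coin_optimal (n : ℕ) (hn : 2 ≤ n) (a : Fin n → ℤ)
    (hS : ∑ i : Fin n, ((i : ℤ) + 1) * a i ≤ -2)
    (hver : ∀ σ : Equiv.Perm (Fin n), σ ≠ 1 →
      0 ≤ ∑ i : Fin n, ((i : ℤ) + 1) * a (σ i)) :
    ∃ b : Fin n → ℤ, (∀ i j : Fin n, i < j → b j < b i) ∧
      (∑ i : Fin n, ((i : ℤ) + 1) * b i = 0 ∨
        ∑ i : Fin n, ((i : ℤ) + 1) * b i = -1) ∧
      ∑ i : Fin n, |b i| < ∑ i : Fin n, |a i| := by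
  obtain ⟨σ, hSum, hσ2⟩ : ∃ σ : ℤ, (∑ i : Fin n, ((i:ℤ)+1) * a i = -σ) ∧ 2 ≤ σ :=
    ⟨-(∑ i : Fin n, ((i:ℤ)+1) * a i), by ring, by linarith⟩
  clear hS
  -- adjacent gaps
  have gap : ∀ (m : ℕ) (hm : m + 1 < n), σ ≤ a ⟨m, Nat.lt_of_succ_lt hm⟩ - a ⟨m+1, hm⟩ := by
    intro m hm
    set i0 : Fin n := ⟨m, Nat.lt_of_succ_lt hm⟩ with hi0
    set i1 : Fin n := ⟨m+1, hm⟩ with hi1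
    have hne : i0 ≠ i1 := by
      simp only [hi0, hi1, Ne, Fin.mk.injEq]
      omega
    have hsw := hver (Equiv.swap i0 i1) (by
      rw [Ne, Equiv.swap_eq_one_iff]; exact hne)
    rw [swap_sum a i0 i1 hne, hSum] at hsw
    have hval : ((i1:ℕ):ℤ) - ((i0:ℕ):ℤ) = 1 := by
      simp only [hi0, hi1]
      push_cast
      ring
    rw [hval] at hsw
    linarith
  -- chained gaps
  have chain : ∀ (v : ℕ) (hv : v < n) (u : ℕ) (hu : u ≤ v),
      a ⟨v, hv⟩ + σ * ((v:ℤ) - (u:ℤ)) ≤ a ⟨u, Nat.lt_of_le_of_lt hu hv⟩ := by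
    intro v
    induction v with
    | zero =>
      intro hv u hu
      have : u = 0 := by omega
      subst this
      simp
    | succ w ih =>
      intro hv u hu
      rcases Nat.eq_or_lt_of_le hu with he | hlt
      · subst he
        simp
      · have hu' : u ≤ w := by omega
        have h1 : a ⟨w, Nat.lt_of_succ_lt hv⟩ + σ * ((w:ℤ) - (u:ℤ))
            ≤ a ⟨u, Nat.lt_of_le_of_lt hu hv⟩ := ih (Nat.lt_of_succ_lt hv) u hu'
        have h2 := gap w hv
        push_cast
        push_cast at h1
        linarith
  -- existence of a negative entry
  have hneg : ∃ m : ℕ, ∃ hm : m < n, a ⟨m, hm⟩ < 0 := by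
    by_contra h
    push_neg at h
    have : 0 ≤ ∑ i : Fin n, ((i:ℤ)+1) * a i := by
      apply Finset.sum_nonneg
      intro i _
      have h2 : 0 ≤ a i := by simpa using h i.val i.isLt
      positivity
    linarith
  obtain ⟨k, ⟨hk, hak⟩, hkmin⟩ :
      ∃ k : ℕ, (∃ hm : k < n, a ⟨k, hm⟩ < 0) ∧
        ∀ u, u < k → ¬∃ hm : u < n, a ⟨u, hm⟩ < 0 :=
    ⟨Nat.find hneg, Nat.find_spec hneg, fun u hu => Nat.find_min hneg hu⟩
  clear hneg
  have hpos : ∀ (u : ℕ) (hu : u < n), u < k → 0 ≤ a ⟨u, hu⟩ := by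
    intro u hu huk
    have := hkmin u huk
    push_neg at this
    exact this hu
  have hak' : a ⟨k, hk⟩ ≤ -1 := by omega
  -- first entry is positive
  have ha0 : 1 ≤ a ⟨0, by omega⟩ := by
    by_contra h
    push_neg at h
    have h0 : a ⟨0, by omega⟩ ≤ 0 := by omega
    have hall : ∀ (v : ℕ) (hv : v < n), a ⟨v, hv⟩ ≤ 0 := by
      intro v hv
      have hc : a ⟨v, hv⟩ + σ * ((v:ℤ) - ((0:ℕ):ℤ)) ≤ a ⟨0, by omega⟩ :=
        chain v hv 0 (Nat.zero_le v)
      have : 0 ≤ σ * ((v:ℤ) - ((0:ℕ):ℤ)) := by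
        apply mul_nonneg (by linarith)
        push_cast
        omega
      linarith
    have ha1 : a ⟨1, by omega⟩ ≤ -σ := by
      have hg : σ ≤ a ⟨0, by omega⟩ - a ⟨1, by omega⟩ := gap 0 (by omega)
      linarith
    have h1n : 1 < n := by omega
    have h0n : 0 < n := by omega
    have hne10 : (⟨1, h1n⟩ : Fin n) ≠ ⟨0, h0n⟩ := by
      simp [Fin.ext_iff]
    have hle : ∑ i : Fin n, ((i:ℤ)+1) * a i
        ≤ ∑ i : Fin n, ((if i = (⟨1, h1n⟩ : Fin n) then 2 * a ⟨1, h1n⟩ else 0)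
            + (if i = (⟨0, h0n⟩ : Fin n) then 0 else 0)) := by
      apply Finset.sum_le_sum
      intro i _
      by_cases h1 : i = (⟨1, h1n⟩ : Fin n)
      · rw [h1, if_pos rfl, if_neg hne10]
        norm_num
      · rw [if_neg h1]
        have hia : a i ≤ 0 := by
          have := hall i.val i.isLt
          simpa using this
        have hw : (0:ℤ) ≤ (i:ℤ) + 1 := by positivity
        have hterm : ((i:ℤ)+1) * a i ≤ 0 := mul_nonpos_of_nonneg_of_nonpos hw hia
        split_ifs <;> linarith
    rw [sum_two_point (⟨1, h1n⟩ : Fin n) (⟨0, h0n⟩ : Fin n) hne10 (2 * a ⟨1, h1n⟩) 0] at hle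
    rw [hSum] at hle
    have ha1' : a ⟨1, h1n⟩ ≤ -σ := ha1
    linarith
  have hk1 : 1 ≤ k := by
    rcases Nat.eq_zero_or_pos k with h | h
    · exfalso
      have : a ⟨0, by omega⟩ < 0 := by
        have := hak
        simp only [h] at this
        exact this
      linarith
    · exact h
  -- σ as a natural number
  obtain ⟨m, hmσ, hm2⟩ : ∃ m : ℕ, (m:ℤ) = σ ∧ 2 ≤ m :=
    ⟨σ.toNat, Int.toNat_of_nonneg (by linarith), by omega⟩
  
  rcases le_or_gt m n with hmn | hmn
  · -- σ ≤ n
    rcases Nat.lt_or_ge k (m-1+1) with hkm | hkm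
    · -- Case A : k ≤ m-1, add one coin at index m-1 (weight m)
      have hkm' : k ≤ m - 1 := by omega
      have hpm : m - 1 < n := by omega
      have h0n : 0 < n := by omega
      have hqp : (⟨0, h0n⟩ : Fin n) < (⟨m-1, hpm⟩ : Fin n) := by
        simp [Fin.lt_def]
        omega
      have hcap : (1:ℤ) ≤ -a ⟨m-1, hpm⟩ := by
        have hc : a ⟨m-1, hpm⟩ + σ * (((m-1:ℕ):ℤ) - ((k:ℕ):ℤ)) ≤ a ⟨k, hk⟩ :=
          chain (m-1) hpm k hkm'
        have hnn : 0 ≤ σ * (((m-1:ℕ):ℤ) - ((k:ℕ):ℤ)) := by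
          apply mul_nonneg (by linarith)
          omega
        linarith
      apply master a σ hσ2 hSum gap ⟨m-1, hpm⟩ ⟨0, h0n⟩ hqp 1 0
        (by norm_num) hcap (by linarith) (Or.inr ⟨le_refl 0, le_trans (by norm_num) ha0⟩)
        (by linarith) (by linarith) (fun _ => by linarith) (by norm_num)
      left
      have : ((⟨m-1, hpm⟩ : Fin n) : ℤ) = (m:ℤ) - 1 := by
        have : ((⟨m-1, hpm⟩ : Fin n) : ℕ) = m - 1 := rfl
        omega
      rw [this]
      linarith
    · -- Case D : k ≥ m, move a coin from index k-m to index k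
      have hkm' : m ≤ k := by omega
      have hqn : k - m < n := by omega
      have hqp : (⟨k-m, hqn⟩ : Fin n) < (⟨k, hk⟩ : Fin n) := by
        simp [Fin.lt_def]
        omega
      have haq : 1 ≤ a ⟨k-m, hqn⟩ := by
        have hc : a ⟨k-1, by omega⟩ + σ * (((k-1:ℕ):ℤ) - ((k-m:ℕ):ℤ))
            ≤ a ⟨k-m, hqn⟩ := chain (k-1) (by omega) (k-m) (by omega)
        have hp0 : 0 ≤ a ⟨k-1, by omega⟩ := hpos (k-1) (by omega) (by omega)
        have hval : ((k-1:ℕ):ℤ) - ((k-m:ℕ):ℤ) = (m:ℤ) - 1 := by omega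
        rw [hval] at hc
        have : σ * 1 ≤ σ * ((m:ℤ) - 1) := by
          apply mul_le_mul_of_nonneg_left _ (by linarith)
          omega
        linarith
      apply master a σ hσ2 hSum gap ⟨k, hk⟩ ⟨k-m, hqn⟩ hqp 1 (-1)
        (by norm_num) (by linarith) (by linarith)
        (Or.inr ⟨by norm_num, by simpa using haq⟩)
        (by linarith) (by linarith)
        (fun h => by
          exfalso
          have h1 : ((⟨k-m, hqn⟩ : Fin n) : ℕ) = k - m := rfl
          have h2 : ((⟨k, hk⟩ : Fin n) : ℕ) = k := rfl
          omega)
        (by norm_num)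
      left
      have hv1 : ((⟨k, hk⟩ : Fin n) : ℤ) = (k:ℤ) := rfl
      have hv2 : ((⟨k-m, hqn⟩ : Fin n) : ℤ) = (k:ℤ) - (m:ℤ) := by
        have : ((⟨k-m, hqn⟩ : Fin n) : ℕ) = k - m := rfl
        omega
      rw [hv1, hv2]
      linarith
  · -- σ > n
    have hσn : (n:ℤ) + 1 ≤ σ := by omega
    
    rcases Nat.lt_or_ge k 2 with hk2 | hk2
    · -- Case C : k = 1
      have hkeq : k = 1 := by omega
      have ha1 : a ⟨1, by omega⟩ < 0 := by
        have := hak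
        simp only [hkeq] at this
        exact this
      obtain ⟨α, ρ, hdm, hρ⟩ : ∃ α ρ : ℕ, n * α + ρ = m ∧ ρ < n :=
        ⟨m / n, m % n, Nat.div_add_mod m n, Nat.mod_lt m (by omega)⟩
      have hα1 : 1 ≤ α := by
        rcases Nat.eq_zero_or_pos α with h | h
        · subst h; simp at hdm; omega
        · exact h
      have hαm : α + 1 ≤ m := by
        by_contra h
        push_neg at h
        have hα : m ≤ α := by omega
        have h2a : 2 * m ≤ n * m := Nat.mul_le_mul_right m (by omega)
        have h2b : n * m ≤ n * α := Nat.mul_le_mul_left n hα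
        omega
      have hαm' : (α:ℤ) ≤ σ - 1 := by omega
      have hpn : n - 1 < n := by omega
      have hcap : (α:ℤ) ≤ -a ⟨n-1, hpn⟩ := by
        rcases Nat.lt_or_ge n 3 with hn3 | hn3
        · -- n = 2 : mass bound
          have hne : n = 2 := by omega
          have hmass : a ⟨0, by omega⟩ + (n:ℤ) * a ⟨n-1, hpn⟩
              ≤ ∑ i : Fin n, ((i:ℤ)+1) * a i :=
            mass_bound hn a (by
              intro i hi0 hin
              exfalso
              have := i.isLt
              omega)
          rw [hSum] at hmass
          have ha0' : 1 ≤ a ⟨0, by omega⟩ := ha0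
          have h2α : (n:ℤ) * α ≤ (m:ℤ) := by
            have : n * α ≤ m := by omega
            exact_mod_cast this
          -- n * (-a_{n-1}) ≥ σ + a_0 ≥ σ + 1 > n * α
          have : (n:ℤ) * (α:ℤ) < (n:ℤ) * (-a ⟨n-1, hpn⟩) := by linarith
          have := lt_of_mul_lt_mul_left this (by positivity : (0:ℤ) ≤ (n:ℤ))
          linarith
        · -- n ≥ 3 : chain bound
          have hc : a ⟨n-1, hpn⟩ + σ * (((n-1:ℕ):ℤ) - ((1:ℕ):ℤ)) ≤ a ⟨1, by omega⟩ :=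
            chain (n-1) hpn 1 (by omega)
          have hval : ((n-1:ℕ):ℤ) - ((1:ℕ):ℤ) = (n:ℤ) - 2 := by omega
          rw [hval] at hc
          have hσ1 : σ * 1 ≤ σ * ((n:ℤ) - 2) := by
            apply mul_le_mul_of_nonneg_left _ (by linarith)
            omega
          have : a ⟨n-1, hpn⟩ ≤ -1 - σ := by linarith
          linarith
      rcases Nat.lt_or_ge ρ 2 with hρ2 | hρ2
      · -- ρ ∈ {0,1} : single point at n-1
        have h0n : 0 < n := by omega
        have hqp : (⟨0, h0n⟩ : Fin n) < (⟨n-1, hpn⟩ : Fin n) := by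
          simp [Fin.lt_def]; omega
        apply master a σ hσ2 hSum gap ⟨n-1, hpn⟩ ⟨0, h0n⟩ hqp (α:ℤ) 0
          (by positivity) hcap hαm'
          (Or.inr ⟨le_refl 0, le_trans (by norm_num) ha0⟩)
          (by linarith) (by linarith) (fun _ => by linarith) (by simp; omega)
        have hv : ((⟨n-1, hpn⟩ : Fin n) : ℤ) = (n:ℤ) - 1 := by
          have : ((⟨n-1, hpn⟩ : Fin n) : ℕ) = n - 1 := rfl
          omega
        rw [hv]
        have hcast : (n:ℤ) * (α:ℤ) + (ρ:ℤ) = (m:ℤ) := by exact_mod_cast hdm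
        rcases Nat.lt_or_ge ρ 1 with h | h
        · left
          have : ρ = 0 := by omega
          simp [this] at hcast
          have hq0 : ((⟨0, h0n⟩ : Fin n) : ℤ) = 0 := rfl
          rw [hq0]
          linarith
        · right
          have : ρ = 1 := by omega
          rw [this] at hcast
          have hq0 : ((⟨0, h0n⟩ : Fin n) : ℤ) = 0 := rfl
          rw [hq0]
          push_cast at hcast
          linarith
      · -- ρ ≥ 2 : add coin at index ρ-1 too
        have hqn : ρ - 1 < n := by omega
        have hqp : (⟨ρ-1, hqn⟩ : Fin n) < (⟨n-1, hpn⟩ : Fin n) := by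
          simp [Fin.lt_def]; omega
        have haq : a ⟨ρ-1, hqn⟩ ≤ -1 := by
          have hc : a ⟨ρ-1, hqn⟩ + σ * (((ρ-1:ℕ):ℤ) - ((1:ℕ):ℤ)) ≤ a ⟨1, by omega⟩ :=
            chain (ρ-1) hqn 1 (by omega)
          have hnn : 0 ≤ σ * (((ρ-1:ℕ):ℤ) - ((1:ℕ):ℤ)) := by
            apply mul_nonneg (by linarith)
            omega
          linarith
        apply master a σ hσ2 hSum gap ⟨n-1, hpn⟩ ⟨ρ-1, hqn⟩ hqp (α:ℤ) 1
          (by positivity) hcap hαm'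
          (Or.inl ⟨by norm_num, by linarith⟩)
          (by linarith) (by linarith) (fun _ => by linarith) (by rw [abs_one]; omega)
        left
        have hv : ((⟨n-1, hpn⟩ : Fin n) : ℤ) = (n:ℤ) - 1 := by
          have : ((⟨n-1, hpn⟩ : Fin n) : ℕ) = n - 1 := rfl
          omega
        have hvq : ((⟨ρ-1, hqn⟩ : Fin n) : ℤ) = (ρ:ℤ) - 1 := by
          have : ((⟨ρ-1, hqn⟩ : Fin n) : ℕ) = ρ - 1 := rfl
          omega
        rw [hv, hvq]
        have hcast : (n:ℤ) * (α:ℤ) + (ρ:ℤ) = (m:ℤ) := by exact_mod_cast hdm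
        linarith
    · -- Case B : k ≥ 2
      have hn3 : 3 ≤ n := by omega
      obtain ⟨α, e, hdm, he⟩ : ∃ α e : ℕ, n * α + e = m + n - 1 ∧ e < n :=
        ⟨(m + n - 1) / n, (m + n - 1) % n, Nat.div_add_mod (m + n - 1) n,
          Nat.mod_lt _ (by omega)⟩
      obtain ⟨r, hre, hrn⟩ : ∃ r : ℕ, n * α = m + r ∧ r ≤ n - 1 :=
        ⟨n - 1 - e, by omega, by omega⟩
      have hα1 : 1 ≤ α := by
        rcases Nat.eq_zero_or_pos α with h | h
        · subst h; simp at hre; omega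
        · exact h
      have hαm : α + 1 ≤ m := by
        by_contra h
        push_neg at h
        have hα : m ≤ α := by omega
        have h2 : 3 * m ≤ n * α :=
          le_trans (Nat.mul_le_mul_right m hn3) (Nat.mul_le_mul_left n hα)
        omega
      have hαm' : (α:ℤ) ≤ σ - 1 := by omega
      have hpn : n - 1 < n := by omega
      have h0n : 0 < n := by omega
      -- a_0 ≥ σ
      have ha0σ : σ ≤ a ⟨0, h0n⟩ := by
        have hc : a ⟨k-1, by omega⟩ + σ * (((k-1:ℕ):ℤ) - ((0:ℕ):ℤ)) ≤ a ⟨0, h0n⟩ :=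
          chain (k-1) (by omega) 0 (by omega)
        have hp0 : 0 ≤ a ⟨k-1, by omega⟩ := hpos (k-1) (by omega) (by omega)
        have hσ1 : σ * 1 ≤ σ * (((k-1:ℕ):ℤ) - ((0:ℕ):ℤ)) := by
          apply mul_le_mul_of_nonneg_left _ (by linarith)
          omega
        linarith
      have hcap : (α:ℤ) ≤ -a ⟨n-1, hpn⟩ := by
        rcases Nat.lt_or_ge k (n-1) with hkn | hkn
        · -- k ≤ n-2 : chain bound
          have hc : a ⟨n-1, hpn⟩ + σ * (((n-1:ℕ):ℤ) - ((k:ℕ):ℤ)) ≤ a ⟨k, hk⟩ :=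
            chain (n-1) hpn k (by omega)
          have hσ1 : σ * 1 ≤ σ * (((n-1:ℕ):ℤ) - ((k:ℕ):ℤ)) := by
            apply mul_le_mul_of_nonneg_left _ (by linarith)
            omega
          linarith
        · -- k = n-1 : mass bound
          have hkeq : k = n - 1 := by omega
          have hmass : a ⟨0, by omega⟩ + (n:ℤ) * a ⟨n-1, hpn⟩
              ≤ ∑ i : Fin n, ((i:ℤ)+1) * a i :=
            mass_bound hn a (by
              intro i hi0 hin
              exact hpos i.val i.isLt (by omega))
          rw [hSum] at hmass
          have ha0' : σ ≤ a ⟨0, by omega⟩ := ha0σ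
          have hcast : (n:ℤ) * (α:ℤ) = (m:ℤ) + (r:ℤ) := by exact_mod_cast hre
          -- n * (-a_{n-1}) ≥ σ + a_0 ≥ σ + σ ≥ σ + r... need ≥ m + r = nα
          have hrσ : (r:ℤ) ≤ σ := by omega
          have : (n:ℤ) * (α:ℤ) ≤ (n:ℤ) * (-a ⟨n-1, hpn⟩) := by linarith
          exact le_of_mul_le_mul_left this (by positivity)
      have hqp : (⟨0, h0n⟩ : Fin n) < (⟨n-1, hpn⟩ : Fin n) := by
        simp [Fin.lt_def]; omega
      apply master a σ hσ2 hSum gap ⟨n-1, hpn⟩ ⟨0, h0n⟩ hqp (α:ℤ) (-(r:ℤ))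
        (by positivity) hcap hαm'
        (Or.inr ⟨by simp, by
          have : (r:ℤ) ≤ σ - 2 := by omega
          simp only [neg_neg]
          linarith [ha0σ]⟩)
        (by omega) (by omega)
        (fun h => by
          exfalso
          have h1 : ((⟨0, h0n⟩ : Fin n) : ℕ) = 0 := rfl
          have h2 : ((⟨n-1, hpn⟩ : Fin n) : ℕ) = n - 1 := rfl
          omega)
        (by rw [abs_neg, abs_of_nonneg (by positivity : (0:ℤ) ≤ (r:ℤ))]; omega)
      left
      have hv : ((⟨n-1, hpn⟩ : Fin n) : ℤ) = (n:ℤ) - 1 := by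
        have : ((⟨n-1, hpn⟩ : Fin n) : ℕ) = n - 1 := rfl
        omega
      have hq0 : ((⟨0, h0n⟩ : Fin n) : ℤ) = 0 := rfl
      rw [hv, hq0]
      have hcast : (n:ℤ) * (α:ℤ) = (m:ℤ) + (r:ℤ) := by exact_mod_cast hre
      linarith
end

section
/- Let n ≥ 2 and let a : {1,…,n} → ℤ be a verifying imbalance with the left pan lighter that is not tight, i.e., Σ_{i=1}^n i·a(i) ≤ −2 and Σ_{i=1}^n i·a(σ(i)) ≥ 0 for every permutation σ ≠ id. Then there exists a downhill weighing b : {1,…,n} → ℤ (b(1) > … > b(n)) with Σ_{i=1}^n i·b(i) ∈ {0, −1} of strictly smaller total weight: Σ_{i=1}^n i·|b(i)| < Σ_{i=1}^n i·|a(i)|. In other words, the smallest total weight cannot be achieved by a downhill imbalance that is not tight. -/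
/-!
Swapping the coins of two neighbouring bags shows that a verifying imbalance of balance `-t`
drops by at least `t` from each bag to the next. This slack survives moving coins towards zero:
adding a coin at a negative position `q` raises the balance by `q + 1`, and also removing one at a
positive position `p ≤ q - 2` raises it by `q - p`; each move costs at most one unit of every gap
and lowers the total weight. If the first negative position `m` satisfies `t ≤ m`, the pair move
at `(m - t, m)` gives a balance. Otherwise the single move at position `min t n - 1` gives a
balance or a tight imbalance, unless `t > n + 1`, in which case it lowers `t` by `n` and we recur.
-/

open Finset

namespace Weighing

variable {n : ℕ}

def balance (a : Fin n → ℤ) : ℤ := ∑ i : Fin n, ((i : ℤ) + 1) * a i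

def totalWeight (a : Fin n → ℤ) : ℤ := ∑ i : Fin n, ((i : ℤ) + 1) * |a i|

@[simp]
lemma balance_add (a b : Fin n → ℤ) : balance (a + b) = balance a + balance b := by
  simp [balance, mul_add, sum_add_distrib]

@[simp]
lemma balance_sub (a b : Fin n → ℤ) : balance (a - b) = balance a - balance b := by
  simp [balance, mul_sub, sum_sub_distrib]

@[simp]
lemma balance_single (q : Fin n) (c : ℤ) : balance (Pi.single q c) = ((q : ℤ) + 1) * c := by
  simp [balance, Pi.single_apply]

lemma comp_swap_eq_add_single_add_single {ι G : Type*} [DecidableEq ι] [AddCommGroup G]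
    (a : ι → G) (i j : ι) :
    a ∘ Equiv.swap i j = a + Pi.single i (a j - a i) + Pi.single j (a i - a j) := by
  ext k
  rcases eq_or_ne k i with rfl | hki
  · rcases eq_or_ne k j with rfl | hkj <;> simp [*]
  · rcases eq_or_ne k j with rfl | hkj
    · simp [hki]
    · simp [Equiv.swap_apply_of_ne_of_ne, *]

lemma balance_comp_swap (a : Fin n → ℤ) (i j : Fin n) :
    balance (a ∘ Equiv.swap i j) = balance a + ((j : ℤ) - i) * (a i - a j) := by
  rw [comp_swap_eq_add_single_add_single]
  simp only [balance_add, balance_single]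
  ring

lemma totalWeight_lt_of_abs_le {a b : Fin n → ℤ} (h : ∀ i, |b i| ≤ |a i|) {q : Fin n}
    (hq : |b q| < |a q|) : totalWeight b < totalWeight a := by
  unfold totalWeight
  exact sum_lt_sum (fun i _ => mul_le_mul_of_nonneg_left (h i) (by positivity))
    ⟨q, mem_univ q, mul_lt_mul_of_pos_left hq (by positivity)⟩

lemma totalWeight_add_single_lt {a : Fin n → ℤ} {q : Fin n} (hq : a q < 0) :
    totalWeight (a + Pi.single q 1) < totalWeight a := by
  have hq' : |a q + 1| < |a q| := by rw [abs_of_neg hq, abs_of_nonpos (by omega)]; omega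
  refine totalWeight_lt_of_abs_le (q := q) (fun i => ?_) (by simpa using hq')
  rcases eq_or_ne i q with rfl | hiq
  · simpa using hq'.le
  · simp [hiq]

lemma totalWeight_add_single_sub_single_lt {a : Fin n → ℤ} {p q : Fin n} (hp : 0 < a p)
    (hq : a q < 0) : totalWeight (a + (Pi.single q 1 - Pi.single p 1)) < totalWeight a := by
  have hpq : p ≠ q := by rintro rfl; omega
  have hp' : |a p - 1| < |a p| := by rw [abs_of_pos hp, abs_of_nonneg (by omega)]; omega
  have hq' : |a q + 1| < |a q| := by rw [abs_of_neg hq, abs_of_nonpos (by omega)]; omega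
  refine totalWeight_lt_of_abs_le (q := q) (fun i => ?_) (by simpa [hpq.symm] using hq')
  rcases eq_or_ne i q with rfl | hiq
  · simpa [hpq.symm] using hq'.le
  rcases eq_or_ne i p with rfl | hip
  · simpa [hiq, sub_eq_add_neg] using hp'.le
  · simp [hiq, hip]

def GapsAtLeast (t : ℤ) (a : Fin (n + 1) → ℤ) : Prop :=
  ∀ i : Fin n, t ≤ a i.castSucc - a i.succ

namespace GapsAtLeast

variable {s t : ℤ} {a d : Fin (n + 1) → ℤ}

lemma mono (h : GapsAtLeast t a) (hst : s ≤ t) : GapsAtLeast s a :=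
  fun i => hst.trans (h i)

lemma add (ha : GapsAtLeast t a) (hd : GapsAtLeast s d) : GapsAtLeast (t + s) (a + d) :=
  fun i => by simp only [Pi.add_apply]; linarith [ha i, hd i]

lemma le_sub (h : GapsAtLeast t a) {i j : Fin (n + 1)} (hij : (j : ℕ) = i + 1) :
    t ≤ a i - a j := by
  obtain ⟨k, rfl⟩ : ∃ k : Fin n, k.castSucc = i := ⟨⟨i, by omega⟩, rfl⟩
  convert h k
  ext
  simp [hij]

lemma strictAnti (h : GapsAtLeast t a) (ht : 0 < t) : StrictAnti a :=
  Fin.strictAnti_iff_succ_lt.2 fun i => by linarith [h i]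

end GapsAtLeast

lemma gapsAtLeast_single (q : Fin (n + 1)) :
    GapsAtLeast (-1) (Pi.single q 1 : Fin (n + 1) → ℤ) := by
  intro i
  simp only [Pi.single_apply]
  split_ifs <;> omega

lemma gapsAtLeast_single_sub_single {p q : Fin (n + 1)} (hpq : (p : ℕ) + 2 ≤ q) :
    GapsAtLeast (-1) (Pi.single q 1 - Pi.single p 1 : Fin (n + 1) → ℤ) := by
  intro i
  simp only [Pi.sub_apply, Pi.single_apply, Fin.ext_iff, Fin.val_castSucc, Fin.val_succ]
  split_ifs <;> omega

lemma gapsAtLeast_of_verifying {a : Fin (n + 1) → ℤ}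
    (hver : ∀ σ : Equiv.Perm (Fin (n + 1)), σ ≠ 1 → 0 ≤ balance (a ∘ σ)) :
    GapsAtLeast (-balance a) a := by
  intro i
  have hswap : Equiv.swap i.castSucc i.succ ≠ 1 := by
    simpa [Equiv.swap_eq_one_iff] using (Fin.castSucc_lt_succ (i := i)).ne
  have := hver _ hswap
  rw [balance_comp_swap, Fin.val_succ, Fin.val_castSucc] at this
  push_cast at this
  linarith

lemma last_neg_of_balance_neg {a : Fin (n + 1) → ℤ} (ha : Antitone a) (hS : balance a < 0) :
    a (Fin.last n) < 0 := by
  by_contra! h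
  exact hS.not_ge <| sum_nonneg fun i _ =>
    mul_nonneg (by positivity) (h.trans (ha (Fin.le_last i)))

theorem exists_downhill_lt_of_gapsAtLeast (t : ℕ) (a : Fin (n + 1) → ℤ) (ht : 2 ≤ t)
    (hS : balance a = -t) (hg : GapsAtLeast t a) :
    ∃ b : Fin (n + 1) → ℤ, StrictAnti b ∧ (balance b = 0 ∨ balance b = -1) ∧
      totalWeight b < totalWeight a := by
  have hanti : StrictAnti a := hg.strictAnti (by omega)
  obtain ⟨m, hm, hbefore⟩ := wellFounded_lt.has_min {i | a i < 0}
    ⟨_, last_neg_of_balance_neg hanti.antitone (by omega)⟩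
  by_cases htm : t ≤ m
  · obtain ⟨p, hpm⟩ : ∃ p : Fin (n + 1), (p : ℕ) + t = m := ⟨⟨m - t, by omega⟩, by simp; omega⟩
    have hp : 0 < a p := by
      have hgap := hg.le_sub (i := p) (j := ⟨p + 1, by omega⟩) rfl
      have := hbefore ⟨p + 1, by omega⟩
      simp only [Set.mem_ofPred_eq, Fin.lt_def] at this
      omega
    refine ⟨a + (Pi.single m 1 - Pi.single p 1),
      (hg.add (gapsAtLeast_single_sub_single (by omega))).strictAnti (by omega), Or.inl ?_,
      totalWeight_add_single_sub_single_lt hp hm⟩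
    simp only [balance_sub, balance_add, balance_single, hS]
    push_cast [← hpm]
    ring
  · obtain ⟨q, hq⟩ : ∃ q : Fin (n + 1), (q : ℕ) + 1 = min t (n + 1) :=
      ⟨⟨min t (n + 1) - 1, by omega⟩, by simp only; omega⟩
    have hqneg : a q < 0 := (hanti.antitone (Fin.le_def.2 (by omega))).trans_lt hm
    have hbS : balance (a + Pi.single q 1) = -(t - min t (n + 1) : ℕ) := by
      simp only [balance_add, balance_single, hS]
      omega
    have hbg : GapsAtLeast (t - 1) (a + Pi.single q 1) := hg.add (gapsAtLeast_single q)
    have hbW := totalWeight_add_single_lt hqneg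
    by_cases hsmall : t ≤ n + 2
    · exact ⟨_, hbg.strictAnti (by omega), by omega, hbW⟩
    · obtain ⟨c, hc, hcS, hcW⟩ := exists_downhill_lt_of_gapsAtLeast (t - min t (n + 1)) _
        (by omega) hbS (hbg.mono (by omega))
      exact ⟨c, hc, hcS, hcW.trans hbW⟩
termination_by t
decreasing_by omega

end Weighing

open Weighing in
theorem not_tight_not_weight_optimal_general (n : ℕ) (a : Fin n → ℤ)
    (hS : ∑ i : Fin n, ((i : ℤ) + 1) * a i ≤ -2)
    (hver : ∀ σ : Equiv.Perm (Fin n), σ ≠ 1 →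
      0 ≤ ∑ i : Fin n, ((i : ℤ) + 1) * a (σ i)) :
    ∃ b : Fin n → ℤ, (∀ i j : Fin n, i < j → b j < b i) ∧
      (∑ i : Fin n, ((i : ℤ) + 1) * b i = 0 ∨
        ∑ i : Fin n, ((i : ℤ) + 1) * b i = -1) ∧
      ∑ i : Fin n, ((i : ℤ) + 1) * |b i| < ∑ i : Fin n, ((i : ℤ) + 1) * |a i| := by
  obtain ⟨k, rfl⟩ : ∃ k, n = k + 1 := Nat.exists_eq_succ_of_ne_zero (by rintro rfl; simp at hS)
  have hS : balance a ≤ -2 := hS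
  exact exists_downhill_lt_of_gapsAtLeast (-balance a).toNat a (by omega) (by omega)
    ((gapsAtLeast_of_verifying hver).mono (by omega))

/-- The smallest total weight cannot be achieved by a (verifying, hence
downhill) imbalance that is not tight: some downhill balance or tight
imbalance has strictly smaller total weight. -/
theorem not_tight_not_weight_optimal (n : ℕ) (hn : 2 ≤ n) (a : Fin n → ℤ)
    (hS : ∑ i : Fin n, ((i : ℤ) + 1) * a i ≤ -2)
    (hver : ∀ σ : Equiv.Perm (Fin n), σ ≠ 1 →
      0 ≤ ∑ i : Fin n, ((i : ℤ) + 1) * a (σ i)) :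
    ∃ b : Fin n → ℤ, (∀ i j : Fin n, i < j → b j < b i) ∧
      (∑ i : Fin n, ((i : ℤ) + 1) * b i = 0 ∨
        ∑ i : Fin n, ((i : ℤ) + 1) * b i = -1) ∧
      ∑ i : Fin n, ((i : ℤ) + 1) * |b i| < ∑ i : Fin n, ((i : ℤ) + 1) * |a i| :=
  not_tight_not_weight_optimal_general n a hS hver
end

section
/- Let n ≥ 2 and let a, d be integers with d ≥ 1 and gcd(a,d) = 1. Suppose the weighing whose multiplicities form the arithmetic progression a, a−d, a−2d, …, a−(n−1)d (multiplicity a−(i−1)d on coin type i) is a balance, i.e., Σ_{i=1}^n i·(a−(i−1)d) = 0. Then either d = 3, or d = 1 and n ≡ 1 (mod 3). (In particular, 3a = 2(n−1)d.) -/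
lemma sum_ap (a d : ℤ) : ∀ n : ℕ,
    6 * ∑ i ∈ Finset.Icc 1 n, (i : ℤ) * (a - ((i : ℤ) - 1) * d) =
      (n : ℤ) * ((n : ℤ) + 1) * (3 * a - 2 * ((n : ℤ) - 1) * d) := by
  intro n
  induction n with
  | zero => simp
  | succ m ih =>
    rw [Finset.sum_Icc_succ_top (by omega)]
    push_cast
    push_cast at ih
    linear_combination ih

/-- A primitive balanced weighing whose multiplicities form the arithmetic
progression `a, a−d, …, a−(n−1)d` satisfies `3a = 2(n−1)d`, and either `d = 3`
or `d = 1` with `n ≡ 1 (mod 3)`. -/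
theorem arithmetic_progression_balance (n : ℕ) (hn : 2 ≤ n) (a d : ℤ)
    (hd : 1 ≤ d) (hcop : IsCoprime a d)
    (hbal : ∑ i ∈ Finset.Icc 1 n, (i : ℤ) * (a - ((i : ℤ) - 1) * d) = 0) :
    3 * a = 2 * ((n : ℤ) - 1) * d ∧ (d = 3 ∨ (d = 1 ∧ n % 3 = 1)) := by
  have hsum := sum_ap a d n
  rw [hbal, mul_zero] at hsum
  have hn0 : (0:ℤ) < (n : ℤ) := by exact_mod_cast (by omega : 0 < n)
  have key : 3 * a = 2 * ((n : ℤ) - 1) * d := by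
    have hne : (n : ℤ) * ((n : ℤ) + 1) ≠ 0 := by positivity
    have := mul_eq_zero.mp hsum.symm
    rcases this with h | h
    · exact absurd h hne
    · linarith
  refine ⟨key, ?_⟩
  have hdvd : d ∣ 3 * a := ⟨2 * ((n : ℤ) - 1), by rw [key]; ring⟩
  have hd3 : d ∣ 3 := hcop.symm.dvd_of_dvd_mul_right hdvd
  have hle : d ≤ 3 := Int.le_of_dvd (by norm_num) hd3
  interval_cases d
  · right
    refine ⟨rfl, ?_⟩
    omega
  · exfalso
    have : (2:ℤ) ∣ 3 := hd3
    norm_num at this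
  · left; rfl
end
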